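/- arXiv:1908.03555 — 9 statements merged into one kernel-verified Lean document; each statement's English description precedes it below -/
import Mathlib

section
/- Let X be a complex Banach space, A : X → X a bounded linear operator, and C an unbounded curve emanating from the origin. If the angle of A along C satisfies φ_C(A) < π (equivalently, there exists a constant c with 0 < c ≤ 1 such that ‖Ax − λx‖ ≥ c‖Ax‖ for all x ∈ X and all λ ∈ C), then R(A) ∩ N(A) = {0} and the subspace cl(R(A)) + N(A) is closed in X, where cl(R(A)) denotes the norm closure of R(A). -/
open Filter Set

/-- If the angle of `A` along an unbounded curve `C` emanating from the origin is
less than `π` (i.e. `‖Ax − λx‖ ≥ c‖Ax‖` for some `0 < c ≤ 1`, all `x` and all `λ ∈ C`),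
then `R(A) ∩ N(A) = {0}` and `cl(R(A)) + N(A)` is closed. -/
theorem stmt_0 {X : Type*} [NormedAddCommGroup X] [NormedSpace ℂ X] [CompleteSpace X]
    (A : X →L[ℂ] X) (C : Set ℂ)
    (hC : ∃ f : ℝ → ℂ, ContinuousOn f (Set.Ici (0 : ℝ)) ∧ f 0 = 0 ∧
      Tendsto (fun t => ‖f t‖) atTop atTop ∧ C = f '' Set.Ici (0 : ℝ))
    (c : ℝ) (hc0 : 0 < c) (hc1 : c ≤ 1)
    (hangle : ∀ x : X, ∀ μ ∈ C, c * ‖A x‖ ≤ ‖A x - μ • x‖) :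
    LinearMap.range (A : X →ₗ[ℂ] X) ⊓ LinearMap.ker (A : X →ₗ[ℂ] X) = ⊥ ∧
      IsClosed ((((LinearMap.range (A : X →ₗ[ℂ] X)).topologicalClosure ⊔ LinearMap.ker (A : X →ₗ[ℂ] X) :
        Submodule ℂ X) : Set X)) := by
  obtain ⟨f, hf, hf0, hftop, hCf⟩ := hC
  -- C contains points of every positive norm
  have hnorm : ∀ ε : ℝ, 0 < ε → ∃ μ ∈ C, ‖μ‖ = ε := by
    intro ε hε
    obtain ⟨T, hT⟩ := ((tendsto_atTop.1 hftop ε).and (eventually_ge_atTop 0)).exists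
    have hg : ContinuousOn (fun t => ‖f t‖) (Icc 0 T) :=
      (continuous_norm.comp_continuousOn (hf.mono Icc_subset_Ici_self))
    have : ε ∈ (fun t => ‖f t‖) '' Icc 0 T := by
      apply intermediate_value_Icc hT.2 hg
      exact ⟨by simp [hf0, le_of_lt hε], hT.1⟩
    obtain ⟨t, ht, htε⟩ := this
    exact ⟨f t, by rw [hCf]; exact ⟨t, ht.1, rfl⟩, htε⟩
  -- key inequality
  have key : ∀ (x v : X), A v = 0 → c * ‖A x‖ ≤ ‖A x + v‖ := by
    intro x v hv
    rcases eq_or_ne x 0 with hx | hx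
    · simp only [hx, map_zero, norm_zero, mul_zero, zero_add]
      exact norm_nonneg _
    · have hxnorm : 0 < ‖x‖ := norm_pos_iff.2 hx
      apply le_of_forall_pos_le_add
      intro ε hε
      obtain ⟨μ, hμC, hμn⟩ := hnorm (ε / ‖x‖) (div_pos hε hxnorm)
      have hμ0 : μ ≠ 0 := by
        intro h
        rw [h, norm_zero] at hμn
        exact (div_pos hε hxnorm).ne' hμn.symm
      have hAy : A (x - μ⁻¹ • v) = A x := by
        simp [map_sub, map_smul, hv]
      have h1 := hangle (x - μ⁻¹ • v) μ hμC
      rw [hAy] at h1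
      have h2 : A x - μ • (x - μ⁻¹ • v) = (A x + v) - μ • x := by
        rw [smul_sub, smul_smul, mul_inv_cancel₀ hμ0, one_smul]
        abel
      rw [h2] at h1
      calc c * ‖A x‖ ≤ ‖(A x + v) - μ • x‖ := h1
        _ ≤ ‖A x + v‖ + ‖μ • x‖ := norm_sub_le _ _
        _ = ‖A x + v‖ + ε := by
            rw [norm_smul, hμn, div_mul_cancel₀ _ (ne_of_gt hxnorm)]
  -- extend to closure of range
  have key' : ∀ u ∈ (LinearMap.range (A : X →ₗ[ℂ] X)).topologicalClosure, ∀ v ∈ LinearMap.ker (A : X →ₗ[ℂ] X),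
      c * ‖u‖ ≤ ‖u + v‖ := by
    intro u hu v hv
    have hset : closure (LinearMap.range (A : X →ₗ[ℂ] X) : Set X) ⊆ {u : X | c * ‖u‖ ≤ ‖u + v‖} := by
      apply closure_minimal
      · rintro _ ⟨x, rfl⟩
        exact key x v hv
      · exact isClosed_le (continuous_const.mul continuous_norm)
          ((continuous_id.add continuous_const).norm)
    exact hset hu
  constructor
  · -- trivial intersection
    rw [eq_bot_iff]
    rintro z ⟨⟨x, rfl⟩, hz2⟩
    have hz : A (A x) = 0 := hz2
    have h := key x (-(A x)) (by simp [hz])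
    simp only [add_neg_cancel, norm_zero] at h
    have hle : ‖A x‖ ≤ 0 := by nlinarith [norm_nonneg (A x)]
    have : A x = 0 := norm_le_zero_iff.1 hle
    exact (Submodule.mem_bot ℂ).2 this
  · -- closedness of cl(R(A)) + N(A)
    set M := (LinearMap.range (A : X →ₗ[ℂ] X)).topologicalClosure with hM
    set N := LinearMap.ker (A : X →ₗ[ℂ] X) with hN
    have hMclosed : IsClosed (M : Set X) := (LinearMap.range (A : X →ₗ[ℂ] X)).isClosed_topologicalClosure
    have hNclosed : IsClosed (N : Set X) := by
      have : (N : Set X) = A ⁻¹' {0} := by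
        ext y; simp [hN, LinearMap.mem_ker]
      rw [this]
      exact isClosed_singleton.preimage A.continuous
    apply IsSeqClosed.isClosed
    intro xseq w hmem htend
    choose u hu v hv huv using fun n => Submodule.mem_sup.1 (hmem n)
    have hcauchy : CauchySeq u := by
      have hx : CauchySeq xseq := htend.cauchySeq
      rw [Metric.cauchySeq_iff] at hx ⊢
      intro ε hε
      obtain ⟨K, hK⟩ := hx (c * ε) (mul_pos hc0 hε)
      refine ⟨K, fun m hm n hn => ?_⟩
      have h := key' (u m - u n) (M.sub_mem (hu m) (hu n)) (v m - v n)
        (N.sub_mem (hv m) (hv n))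
      have heq : (u m - u n) + (v m - v n) = xseq m - xseq n := by
        rw [← huv m, ← huv n]; abel
      rw [heq] at h
      have hlt : ‖xseq m - xseq n‖ < c * ε := by
        rw [← dist_eq_norm]; exact hK m hm n hn
      rw [dist_eq_norm]
      exact lt_of_mul_lt_mul_left (lt_of_le_of_lt h hlt) hc0.le
    obtain ⟨ulim, hulim⟩ := cauchySeq_tendsto_of_complete hcauchy
    have hulimM : ulim ∈ M := hMclosed.isSeqClosed hu hulim
    have hvlim : Tendsto v atTop (nhds (w - ulim)) := by
      have hveq : v = fun n => xseq n - u n := funext fun n => by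
        rw [← huv n]; abel
      rw [hveq]
      exact htend.sub hulim
    have hvlimN : w - ulim ∈ N := hNclosed.isSeqClosed hv hvlim
    have hw : w = ulim + (w - ulim) := by abel
    rw [hw]
    exact Submodule.mem_sup.2 ⟨ulim, hulimM, w - ulim, hvlimN, rfl⟩
end

section
/- Let X be a complex Banach space and A : X → X a bounded linear operator such that 0 belongs to the closure of D∞, the unbounded component of the resolvent set of A. Then X = R(A) ⊕ N(A) (i.e., X is the direct sum of the range and the kernel of A) if and only if R(A) is closed and there exists an unbounded curve C emanating from the origin with φ_C(A) < π (equivalently, with sin_C A > 0). -/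
open Filter Set ContinuousLinearMap

set_option linter.unusedSectionVars false
set_option linter.unusedVariables false

section Aux

variable {X : Type*} [NormedAddCommGroup X] [NormedSpace ℂ X] [CompleteSpace X]

lemma aux_unit_of_norm_lt (A : X →L[ℂ] X) {μ : ℂ} (h : ‖A‖ < ‖μ‖) :
    IsUnit (A - μ • (1 : X →L[ℂ] X)) := by
  have hμ : μ ≠ 0 := by
    intro h0; rw [h0, norm_zero] at h; exact absurd h (not_lt.mpr (norm_nonneg A))
  have hμpos : 0 < ‖μ‖ := lt_of_le_of_lt (norm_nonneg A) h
  have h1 : ‖μ⁻¹ • A‖ < 1 := by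
    rw [norm_smul μ⁻¹ A, norm_inv, inv_mul_lt_iff₀ hμpos, mul_one]; exact h
  have u1 : IsUnit ((1 : X →L[ℂ] X) - μ⁻¹ • A) := (Units.oneSub _ h1).isUnit
  have key : A - μ • (1 : X →L[ℂ] X) = (-μ) • ((1 : X →L[ℂ] X) - μ⁻¹ • A) := by
    match_scalars <;> field_simp
  rw [key, Algebra.smul_def]
  exact ((isUnit_iff_ne_zero.mpr (neg_ne_zero.mpr hμ)).map (algebraMap ℂ (X →L[ℂ] X))).mul u1

lemma aux_mem_resolvent_of_norm_lt (A : X →L[ℂ] X) {μ : ℂ} (h : ‖A‖ < ‖μ‖) :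
    μ ∈ resolventSet ℂ A := by
  rw [spectrum.mem_resolventSet_iff, Algebra.algebraMap_eq_smul_one]
  have := (aux_unit_of_norm_lt A h).neg
  rwa [neg_sub] at this

lemma aux_nonunit_stable {T S : X →L[ℂ] X} {m : ℝ} (hm : 0 < m)
    (hT : ∀ x, m * ‖x‖ ≤ ‖T x‖) (hTn : ¬ IsUnit T) (hST : ‖S - T‖ < m / 2) : ¬ IsUnit S := by
  intro hS
  set u := hS.unit with hu
  have huS : (↑u : X →L[ℂ] X) = S := hS.unit_spec
  have hSx : ∀ x, m / 2 * ‖x‖ ≤ ‖S x‖ := by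
    intro x
    have h1 := hT x
    have h2 : ‖T x - S x‖ ≤ m / 2 * ‖x‖ := by
      have := (T - S).le_opNorm x
      rw [sub_apply] at this
      have h3 : ‖T - S‖ ≤ m / 2 := by
        rw [← neg_sub S T, norm_neg]; exact le_of_lt hST
      nlinarith [norm_nonneg x]
    have h4 : ‖T x‖ ≤ ‖S x‖ + ‖T x - S x‖ := by
      have := norm_add_le (S x) (T x - S x)
      simpa using this
    linarith
  have hinv : ‖(↑u⁻¹ : X →L[ℂ] X)‖ ≤ 2 / m := by
    apply opNorm_le_bound _ (by positivity)
    intro y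
    have h5 := hSx ((↑u⁻¹ : X →L[ℂ] X) y)
    have h6 : S ((↑u⁻¹ : X →L[ℂ] X) y) = y := by
      rw [← huS] at *
      have : ((↑u * ↑u⁻¹ : X →L[ℂ] X)) y = y := by rw [u.mul_inv]; rfl
      rwa [mul_apply_eq_comp] at this
    rw [h6] at h5
    rw [div_mul_eq_mul_div, le_div_iff₀ hm, mul_comm]
    linarith
  have hv : ‖(↑u⁻¹ : X →L[ℂ] X) * (S - T)‖ < 1 := by
    calc ‖(↑u⁻¹ : X →L[ℂ] X) * (S - T)‖ ≤ ‖(↑u⁻¹ : X →L[ℂ] X)‖ * ‖S - T‖ := norm_mul_le _ _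
    _ ≤ (2 / m) * ‖S - T‖ := by
        apply mul_le_mul_of_nonneg_right hinv (norm_nonneg _)
    _ < (2 / m) * (m / 2) := by
        apply mul_lt_mul_of_pos_left hST (by positivity)
    _ = 1 := by field_simp
  have hTeq : T = ↑u * ((1 : X →L[ℂ] X) - ↑u⁻¹ * (S - T)) := by
    rw [mul_sub, mul_one, ← mul_assoc, u.mul_inv, one_mul, huS]
    abel
  exact hTn (hTeq ▸ u.isUnit.mul (Units.oneSub _ hv).isUnit)

lemma aux_key_ineq (A : X →L[ℂ] X) (f : ℝ → ℂ) (hfc : ContinuousOn f (Ici 0)) (hf0 : f 0 = 0)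
    (hft : Tendsto (fun t => ‖f t‖) atTop atTop) {c : ℝ} (hc : 0 < c)
    (hest : ∀ x : X, ∀ t ∈ Ici (0:ℝ), c * ‖A x‖ ≤ ‖A x - f t • x‖) :
    ∀ y : X, ∀ n ∈ LinearMap.ker (A : X →ₗ[ℂ] X), c * ‖A y‖ ≤ ‖A y + n‖ := by
  intro y n hn
  refine le_of_forall_pos_le_add ?_
  intro ε hε
  set δ : ℝ := ε / (‖y‖ + 1) with hδdef
  have hδ : 0 < δ := by positivity
  -- find t with ‖f t‖ = δ/2
  obtain ⟨T, hT⟩ := eventually_atTop.mp (hft.eventually_ge_atTop δ)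
  set t₁ : ℝ := max T 0 with ht₁def
  have ht₁ : δ ≤ ‖f t₁‖ := hT t₁ (le_max_left _ _)
  have hIcc : Icc (0:ℝ) t₁ ⊆ Ici 0 := Icc_subset_Ici_self
  have hivt := intermediate_value_Icc (le_max_right T 0) ((hfc.mono hIcc).norm)
  have hmem : δ / 2 ∈ Icc ‖f 0‖ ‖f t₁‖ := by
    rw [hf0, norm_zero]
    constructor <;> [positivity; linarith]
  obtain ⟨t, htIcc, htval⟩ := hivt hmem
  have htpos : 0 ≤ t := htIcc.1
  set μ : ℂ := f t with hμdef
  have hμnorm : ‖μ‖ = δ / 2 := htval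
  have hμ0 : μ ≠ 0 := by
    intro h0
    rw [h0, norm_zero] at hμnorm
    linarith
  -- apply estimate at x := y - μ⁻¹ • n
  have hAn : A n = 0 := hn
  have hAx : A (y - μ⁻¹ • n) = A y := by
    rw [map_sub, map_smul, hAn, smul_zero, sub_zero]
  have h1 := hest (y - μ⁻¹ • n) t htpos
  rw [hAx] at h1
  have h2 : A y - μ • (y - μ⁻¹ • n) = (A y + n) - μ • y := by
    rw [smul_sub, smul_smul, mul_inv_cancel₀ hμ0, one_smul]
    abel
  rw [h2] at h1
  have h3 : ‖(A y + n) - μ • y‖ ≤ ‖A y + n‖ + ‖μ‖ * ‖y‖ := by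
    calc ‖(A y + n) - μ • y‖ ≤ ‖A y + n‖ + ‖μ • y‖ := norm_sub_le _ _
    _ = ‖A y + n‖ + ‖μ‖ * ‖y‖ := by rw [norm_smul]
  have h4 : ‖μ‖ * ‖y‖ ≤ ε := by
    rw [hμnorm]
    rw [hδdef]
    rw [div_mul_eq_mul_div, div_le_iff₀ (by positivity : (0:ℝ) < 2)]
    rw [div_mul_eq_mul_div, div_le_iff₀ (by positivity : (0:ℝ) < ‖y‖ + 1)]
    nlinarith [norm_nonneg y, hε.le]
  linarith

lemma aux_units_near_zero (A : X →L[ℂ] X) (f : ℝ → ℂ) (hfc : ContinuousOn f (Ici 0)) (hf0 : f 0 = 0)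
    (hft : Tendsto (fun t => ‖f t‖) atTop atTop) {c : ℝ} (hc : 0 < c)
    (hest : ∀ x : X, ∀ t ∈ Ici (0:ℝ), c * ‖A x‖ ≤ ‖A x - f t • x‖) :
    ∃ μ : ℕ → ℂ, Tendsto μ atTop (nhds 0) ∧ ∀ k, μ k ≠ 0 ∧ (∃ t ∈ Ici (0:ℝ), f t = μ k) ∧
      IsUnit (A - μ k • (1 : X →L[ℂ] X)) := by
  obtain ⟨T₀', hT₀'⟩ := eventually_atTop.mp (hft.eventually_ge_atTop (‖A‖+1))
  set T₀ : ℝ := max T₀' 0 with hT₀def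
  set Z : Set ℝ := Icc 0 T₀ ∩ f ⁻¹' {0} with hZdef
  have hZc : IsClosed Z :=
    ContinuousOn.preimage_isClosed_of_isClosed (hfc.mono Icc_subset_Ici_self)
      isClosed_Icc isClosed_singleton
  have hZcpt : IsCompact Z := isCompact_Icc.of_isClosed_subset hZc inter_subset_left
  have hZne : Z.Nonempty := ⟨0, ⟨le_refl 0, le_max_right _ 0⟩, by simp [hf0]⟩
  set a : ℝ := sSup Z with hadef
  have haZ : a ∈ Z := hZcpt.sSup_mem hZne
  have ha0 : 0 ≤ a := haZ.1.1
  have hfa : f a = 0 := haZ.2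
  -- no zeros after a
  have h_ne : ∀ t, a < t → f t ≠ 0 := by
    intro t hat h0
    by_cases htT : t ≤ T₀
    · have htZ : t ∈ Z := ⟨⟨le_trans ha0 hat.le, htT⟩, h0⟩
      exact absurd (le_csSup hZcpt.bddAbove htZ) (not_le.mpr hat)
    · have h1 := hT₀' t (le_trans (le_max_left _ _) (not_le.mp htT).le)
      rw [h0, norm_zero] at h1
      linarith [norm_nonneg A]
  -- bounded below
  have hbb : ∀ t, 0 ≤ t → ∀ x : X,
      (c * ‖f t‖ / (1+c)) * ‖x‖ ≤ ‖(A - f t • (1 : X →L[ℂ] X)) x‖ := by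
    intro t ht x
    have h1 := hest x t ht
    have h2 : ‖f t‖ * ‖x‖ ≤ ‖A x - f t • x‖ + ‖A x‖ := by
      have h3 : A x - (A x - f t • x) = f t • x := by abel
      calc ‖f t‖ * ‖x‖ = ‖f t • x‖ := (norm_smul _ _).symm
      _ = ‖A x - (A x - f t • x)‖ := by rw [h3]
      _ ≤ ‖A x‖ + ‖A x - f t • x‖ := norm_sub_le _ _
      _ = ‖A x - f t • x‖ + ‖A x‖ := by ring
    have h4 : (A - f t • (1 : X →L[ℂ] X)) x = A x - f t • x := by
      simp [sub_apply, smul_apply, one_apply]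
    rw [h4, div_mul_eq_mul_div, div_le_iff₀ (by positivity)]
    nlinarith [norm_nonneg (A x), norm_nonneg (A x - f t • x)]
  -- continuity of t ↦ A - f t • 1 at points > a
  have hcontAt : ∀ s, a < s → ContinuousAt (fun r : ℝ => A - f r • (1 : X →L[ℂ] X)) s := by
    intro s hs
    have hs0 : 0 < s := lt_of_le_of_lt ha0 hs
    have hfs : ContinuousAt f s := hfc.continuousAt (Ici_mem_nhds hs0)
    exact continuousAt_const.sub (hfs.smul continuousAt_const)
  -- all points after a give units
  have h_unit : ∀ t, a < t → IsUnit (A - f t • (1 : X →L[ℂ] X)) := by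
    by_contra hcon
    push_neg at hcon
    obtain ⟨t₀, hat₀, hnu⟩ := hcon
    set u : Set ℝ := {s | a < s ∧ IsUnit (A - f s • (1 : X →L[ℂ] X))} with hudef
    set v : Set ℝ := {s | a < s ∧ ¬ IsUnit (A - f s • (1 : X →L[ℂ] X))} with hvdef
    have hu_open : IsOpen u := by
      rw [isOpen_iff_mem_nhds]
      rintro s ⟨has, hus⟩
      have h1 := (hcontAt s has).preimage_mem_nhds (Units.isOpen.mem_nhds hus)
      filter_upwards [h1, Ioi_mem_nhds has] with r hr1 hr2
      exact ⟨hr2, hr1⟩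
    have hv_open : IsOpen v := by
      rw [isOpen_iff_mem_nhds]
      rintro s ⟨has, hnus⟩
      have hs0 : 0 ≤ s := le_trans ha0 has.le
      have hfs0 : (0:ℝ) < ‖f s‖ := norm_pos_iff.mpr (h_ne s has)
      set m : ℝ := c * ‖f s‖ / (1+c) with hmdef
      have hm : 0 < m := by positivity
      have hball := (hcontAt s has).preimage_mem_nhds
        (Metric.ball_mem_nhds (A - f s • (1 : X →L[ℂ] X)) (by positivity : (0:ℝ) < m/2))
      filter_upwards [hball, Ioi_mem_nhds has] with r hr1 hr2
      refine ⟨hr2, aux_nonunit_stable hm (hbb s hs0) hnus ?_⟩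
      have hr1' : A - f r • (1 : X →L[ℂ] X) ∈ Metric.ball (A - f s • (1 : X →L[ℂ] X)) (m/2) := hr1
      rw [Metric.mem_ball, dist_eq_norm] at hr1'
      exact hr1'
    -- a point of u
    set tu : ℝ := max T₀ (a+1) with htudef
    have hatu : a < tu := lt_of_lt_of_le (lt_add_one a) (le_max_right _ _)
    have htu_unit : IsUnit (A - f tu • (1 : X →L[ℂ] X)) := by
      apply aux_unit_of_norm_lt
      have := hT₀' tu (le_trans (le_max_left T₀' 0) (le_max_left _ _))
      linarith
    have hsub : Ioi a ⊆ u ∪ v := by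
      intro s hs
      by_cases h : IsUnit (A - f s • (1 : X →L[ℂ] X))
      · exact Or.inl ⟨hs, h⟩
      · exact Or.inr ⟨hs, h⟩
    obtain ⟨s, -, ⟨-, hs1⟩, ⟨-, hs2⟩⟩ := isPreconnected_Ioi (a := a) u v hu_open hv_open hsub
      ⟨tu, hatu, hatu, htu_unit⟩ ⟨t₀, hat₀, hat₀, hnu⟩
    exact hs2 hs1
  -- construct the sequence
  refine ⟨fun k => f (a + 1/((k:ℝ)+1)), ?_, ?_⟩
  · have h1 : Tendsto (fun k : ℕ => a + 1/((k:ℝ)+1)) atTop (nhds a) := by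
      simpa using tendsto_const_nhds.add (tendsto_one_div_add_atTop_nhds_zero_nat (𝕜 := ℝ))
    have h2 : Tendsto (fun k : ℕ => a + 1/((k:ℝ)+1)) atTop (nhdsWithin a (Ici 0)) := by
      rw [tendsto_nhdsWithin_iff]
      refine ⟨h1, Eventually.of_forall fun k => ?_⟩
      have : (0:ℝ) < 1/((k:ℝ)+1) := by positivity
      simp only [mem_Ici]
      linarith
    have h3 := ((hfc a ha0).tendsto).comp h2
    rwa [hfa] at h3
  · intro k
    have hk : a < a + 1/((k:ℝ)+1) := by
      have : (0:ℝ) < 1/((k:ℝ)+1) := by positivity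
      linarith
    exact ⟨h_ne _ hk, ⟨a + 1/((k:ℝ)+1), le_trans ha0 hk.le, rfl⟩, h_unit _ hk⟩

lemma aux_backward (A : X →L[ℂ] X)
    (hcl : IsClosed ((LinearMap.range (A : X →ₗ[ℂ] X) : Submodule ℂ X) : Set X))
    (f : ℝ → ℂ) (hfc : ContinuousOn f (Ici 0)) (hf0 : f 0 = 0)
    (hft : Tendsto (fun t => ‖f t‖) atTop atTop)
    {c : ℝ} (hc : 0 < c)
    (hest : ∀ x : X, ∀ t ∈ Ici (0:ℝ), c * ‖A x‖ ≤ ‖A x - f t • x‖) :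
    IsCompl (LinearMap.range (A : X →ₗ[ℂ] X)) (LinearMap.ker (A : X →ₗ[ℂ] X)) := by
  have key := aux_key_ineq A f hfc hf0 hft hc hest
  constructor
  · -- disjoint
    rw [Submodule.disjoint_def]
    intro x hxR hxN
    obtain ⟨y, hy⟩ := hxR
    have h1 := key y (-x) (neg_mem hxN)
    rw [show A y = x from hy, add_neg_cancel, norm_zero] at h1
    have h2 : ‖x‖ ≤ 0 := by nlinarith [norm_nonneg x]
    simpa using norm_le_zero_iff.mp h2
  · -- codisjoint
    rw [codisjoint_iff, Submodule.eq_top_iff']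
    intro x
    -- open mapping constant for A : X → range A
    haveI : CompleteSpace (LinearMap.range (A : X →ₗ[ℂ] X)) := hcl.completeSpace_coe
    set A' : X →L[ℂ] (LinearMap.range (A : X →ₗ[ℂ] X)) :=
      A.codRestrict (LinearMap.range (A : X →ₗ[ℂ] X)) (fun y => LinearMap.mem_range_self _ y) with hA'def
    have hA'surj : Function.Surjective A' := by
      rintro ⟨y, z, hz⟩
      exact ⟨z, Subtype.ext hz⟩
    obtain ⟨K, hK0, hK⟩ := A'.exists_preimage_norm_le hA'surj
    -- sequence of resolvent points on the curve
    obtain ⟨μ, hμ0, hμprop⟩ := aux_units_near_zero A f hfc hf0 hft hc hest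
    -- for each k, define w k, r k, y k, n k
    set w : ℕ → X := fun k => (((hμprop k).2.2.unit⁻¹ : (X →L[ℂ] X)ˣ) : X →L[ℂ] X) x with hwdef
    have hwx : ∀ k, A (w k) - μ k • (w k) = x := by
      intro k
      have h1 : ((hμprop k).2.2.unit : X →L[ℂ] X) * ((hμprop k).2.2.unit⁻¹ : (X →L[ℂ] X)ˣ) = 1 :=
        (hμprop k).2.2.unit.mul_inv
      have h2 := congrArg (fun (T : X →L[ℂ] X) => T x) h1
      simp only [mul_apply_eq_comp, one_apply] at h2
      have h3 : ((hμprop k).2.2.unit : X →L[ℂ] X) = A - μ k • 1 := (hμprop k).2.2.unit_spec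
      rw [h3] at h2
      simpa [sub_apply, smul_apply, one_apply] using h2
    set r : ℕ → X := fun k => A (w k) with hrdef
    -- bound on ‖r k‖
    have hrb : ∀ k, c * ‖r k‖ ≤ ‖x‖ := by
      intro k
      obtain ⟨t, ht0, htk⟩ := (hμprop k).2.1
      have h1 := hest (w k) t ht0
      rw [htk, hwx k] at h1
      exact h1
    -- x - r k = -(μ k • w k)
    have hxr : ∀ k, x - r k = -(μ k • w k) := by
      intro k
      have := hwx k
      rw [hrdef]
      simp only
      linear_combination (norm := abel) -this
    have hAxr : ∀ k, A (x - r k) = -(μ k • r k) := by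
      intro k
      rw [hxr k, map_neg, map_smul, hrdef]
    have hAxr_norm : ∀ k, ‖A (x - r k)‖ ≤ ‖μ k‖ * (‖x‖ / c) := by
      intro k
      rw [hAxr k, norm_neg, norm_smul]
      have h1 := hrb k
      have h2 : ‖r k‖ ≤ ‖x‖ / c := by rw [le_div_iff₀ hc]; linarith
      exact mul_le_mul_of_nonneg_left h2 (norm_nonneg _)
    -- correction terms
    have hexist : ∀ k, ∃ y : X, A y = A (x - r k) ∧ ‖y‖ ≤ K * ‖A (x - r k)‖ := by
      intro k
      obtain ⟨y, hy1, hy2⟩ := hK (A' (x - r k))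
      refine ⟨y, ?_, ?_⟩
      · have := congrArg (Subtype.val) hy1
        exact this
      · have hnorm : ‖A' (x - r k)‖ = ‖A (x - r k)‖ := rfl
        rwa [hnorm] at hy2
    choose y hy1 hy2 using hexist
    set n : ℕ → X := fun k => x - r k - y k with hndef
    have hnker : ∀ k, n k ∈ LinearMap.ker (A : X →ₗ[ℂ] X) := by
      intro k
      rw [LinearMap.mem_ker, hndef]
      simp only [ContinuousLinearMap.coe_coe, map_sub, hy1 k, sub_self]
    -- y k → 0
    have hytend : Tendsto y atTop (nhds 0) := by
      apply squeeze_zero_norm (fun k => (hy2 k).trans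
        (mul_le_mul_of_nonneg_left (hAxr_norm k) hK0.le))
      have h1 : Tendsto (fun k => K * (‖μ k‖ * (‖x‖ / c))) atTop (nhds (K * (‖(0:ℂ)‖ * (‖x‖ / c)))) :=
        tendsto_const_nhds.mul ((hμ0.norm).mul tendsto_const_nhds)
      simpa using h1
    -- s k := r k + n k = x - y k tends to x
    have hstend : Tendsto (fun k => x - y k) atTop (nhds x) := by
      simpa using tendsto_const_nhds.sub hytend
    have hseq : ∀ k, r k + n k = x - y k := by
      intro k; rw [hndef]; show r k + (x - r k - y k) = x - y k; abel
    -- r is Cauchy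
    have hrcauchy : CauchySeq r := by
      rw [Metric.cauchySeq_iff]
      intro ε hε
      have hscauchy := hstend.cauchySeq
      rw [Metric.cauchySeq_iff] at hscauchy
      obtain ⟨N, hN⟩ := hscauchy (c * ε) (by positivity)
      refine ⟨N, fun i hi j hj => ?_⟩
      have h1 := hN i hi j hj
      rw [dist_eq_norm] at h1 ⊢
      have h2 : A (w i - w j) = r i - r j := by rw [map_sub]
      have h3 := key (w i - w j) (n i - n j) (sub_mem (hnker i) (hnker j))
      rw [h2] at h3
      have h4 : r i - r j + (n i - n j) = (x - y i) - (x - y j) := by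
        have hi' := hseq i
        have hj' := hseq j
        linear_combination (norm := abel) hi' - hj'
      rw [h4] at h3
      nlinarith [norm_nonneg (r i - r j)]
    obtain ⟨rlim, hrlim⟩ := cauchySeq_tendsto_of_complete hrcauchy
    have hrmem : rlim ∈ LinearMap.range (A : X →ₗ[ℂ] X) := by
      apply hcl.mem_of_tendsto hrlim
      exact Eventually.of_forall fun k => LinearMap.mem_range_self _ (w k)
    have hnlim : Tendsto n atTop (nhds (x - rlim)) := by
      have : Tendsto (fun k => (x - y k) - r k) atTop (nhds (x - rlim)) := hstend.sub hrlim
      apply this.congr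
      intro k
      rw [hndef]; abel
    have hnmem : x - rlim ∈ LinearMap.ker (A : X →ₗ[ℂ] X) := by
      apply (ContinuousLinearMap.isClosed_ker A).mem_of_tendsto hnlim
      exact Eventually.of_forall hnker
    rw [Submodule.mem_sup]
    exact ⟨rlim, hrmem, x - rlim, hnmem, by abel⟩

lemma aux_range_closed (A : X →L[ℂ] X)
    (h : IsCompl (LinearMap.range (A : X →ₗ[ℂ] X)) (LinearMap.ker (A : X →ₗ[ℂ] X))) :
    IsClosed ((LinearMap.range (A : X →ₗ[ℂ] X) : Submodule ℂ X) : Set X) := by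
  set N : Submodule ℂ X := LinearMap.ker (A : X →ₗ[ℂ] X) with hNdef
  have hNc : IsClosed (N : Set X) := ContinuousLinearMap.isClosed_ker A
  haveI : IsClosed (N : Set X) := hNc
  haveI : CompleteSpace N := hNc.completeSpace_coe
  -- the lifted map on the quotient
  have hle : N ≤ LinearMap.ker (A : X →ₗ[ℂ] X) := le_refl _
  set Abar₀ : (X ⧸ N) →ₗ[ℂ] X := N.liftQ (A : X →ₗ[ℂ] X) hle with hAbar₀
  have hAbar_bound : ∀ q : X ⧸ N, ‖Abar₀ q‖ ≤ ‖A‖ * ‖q‖ := by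
    intro q
    refine le_of_forall_pos_le_add ?_
    intro ε hε
    obtain ⟨m, hm1, hm2⟩ := Submodule.Quotient.norm_mk_lt q
      (show (0:ℝ) < ε / (‖A‖ + 1) by positivity)
    have h1 : Abar₀ q = A m := by rw [← hm1]; rfl
    rw [h1]
    calc ‖A m‖ ≤ ‖A‖ * ‖m‖ := A.le_opNorm m
    _ ≤ ‖A‖ * (‖q‖ + ε / (‖A‖ + 1)) := by
        exact mul_le_mul_of_nonneg_left hm2.le (norm_nonneg A)
    _ = ‖A‖ * ‖q‖ + ‖A‖ * (ε / (‖A‖ + 1)) := by ring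
    _ ≤ ‖A‖ * ‖q‖ + ε := by
        have h2 : ‖A‖ * (ε / (‖A‖ + 1)) ≤ ε := by
          rw [mul_div_assoc']
          rw [div_le_iff₀ (by positivity : (0:ℝ) < ‖A‖ + 1)]
          nlinarith [norm_nonneg A, hε.le]
        linarith
  set Abar : (X ⧸ N) →L[ℂ] X := Abar₀.mkContinuous ‖A‖ hAbar_bound with hAbar
  -- the sum map
  set Φ : ((X ⧸ N) × N) →L[ℂ] X :=
    Abar.comp (ContinuousLinearMap.fst ℂ (X ⧸ N) N) +
      N.subtypeL.comp (ContinuousLinearMap.snd ℂ (X ⧸ N) N) with hΦ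
  have hΦapply : ∀ (q : X ⧸ N) (n : N), Φ (q, n) = Abar q + n := fun q n => rfl
  have hΦmk : ∀ (m : X) (n : N), Φ (Submodule.Quotient.mk m, n) = A m + n := fun m n => rfl
  have hker : LinearMap.ker (Φ : ((X ⧸ N) × N) →ₗ[ℂ] X) = ⊥ := by
    rw [LinearMap.ker_eq_bot']
    rintro ⟨q, n⟩ hqn
    obtain ⟨m, rfl⟩ := Submodule.Quotient.mk_surjective N q
    rw [ContinuousLinearMap.coe_coe, hΦmk] at hqn
    have hAm : A m ∈ LinearMap.range (A : X →ₗ[ℂ] X) ⊓ N := by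
      constructor
      · exact LinearMap.mem_range_self _ m
      · have : A m = -(n : X) := by linear_combination (norm := abel) hqn
        rw [this]
        exact neg_mem n.2
    rw [h.inf_eq_bot] at hAm
    have hAm0 : A m = 0 := hAm
    have hn0 : (n : X) = 0 := by
      have : (n : X) = -(A m) := by linear_combination (norm := abel) hqn
      rw [this, hAm0, neg_zero]
    have hmN : m ∈ N := hAm0
    refine Prod.ext ?_ (Subtype.ext hn0)
    simpa [Submodule.Quotient.mk_eq_zero] using hmN
  have hrange : LinearMap.range (Φ : ((X ⧸ N) × N) →ₗ[ℂ] X) = ⊤ := by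
    rw [LinearMap.range_eq_top]
    intro z
    have hz : z ∈ LinearMap.range (A : X →ₗ[ℂ] X) ⊔ N := by
      rw [h.sup_eq_top]; trivial
    obtain ⟨r, hr, n, hn, hrn⟩ := Submodule.mem_sup.mp hz
    obtain ⟨m, hm⟩ := hr
    exact ⟨(Submodule.Quotient.mk m, ⟨n, hn⟩), by rw [ContinuousLinearMap.coe_coe] at hm; rw [ContinuousLinearMap.coe_coe, hΦmk, hm, hrn]⟩
  set e := ContinuousLinearEquiv.ofBijective Φ hker hrange with he
  have hRchar : ∀ z : X, z ∈ LinearMap.range (A : X →ₗ[ℂ] X) ↔ (e.symm z).2 = 0 := by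
    intro z
    constructor
    · rintro ⟨m, rfl⟩
      have h1 : e (Submodule.Quotient.mk m, (0 : N)) = A m := by
        show Φ (Submodule.Quotient.mk m, (0 : N)) = A m
        rw [hΦmk]; simp
      rw [ContinuousLinearMap.coe_coe, ← h1, ContinuousLinearEquiv.symm_apply_apply]
    · intro h2
      have h1 : e (e.symm z) = z := e.apply_symm_apply z
      obtain ⟨m, hm⟩ := Submodule.Quotient.mk_surjective N (e.symm z).1
      have h3 : e (e.symm z) = A m + ((e.symm z).2 : X) := by
        show Φ (e.symm z) = _
        have : (e.symm z) = ((e.symm z).1, (e.symm z).2) := rfl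
        rw [this, ← hm, hΦmk]
      rw [h1, h2] at h3
      exact ⟨m, by simpa using h3.symm⟩
  have : (LinearMap.range (A : X →ₗ[ℂ] X) : Set X) = (fun z => (e.symm z).2) ⁻¹' {0} := by
    ext z
    simp [hRchar z]
  rw [this]
  exact IsClosed.preimage (continuous_snd.comp e.symm.continuous) isClosed_singleton

lemma aux_small_bound (A : X →L[ℂ] X)
    (h : IsCompl (LinearMap.range (A : X →ₗ[ℂ] X)) (LinearMap.ker (A : X →ₗ[ℂ] X))) :
    ∃ ε > (0:ℝ), ∃ M : ℝ, ∀ μ : ℂ, ‖μ‖ ≤ ε → ∀ x : X, ‖A x‖ ≤ M * ‖A x - μ • x‖ := by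
  set R : Submodule ℂ X := LinearMap.range (A : X →ₗ[ℂ] X) with hRdef
  set N : Submodule ℂ X := LinearMap.ker (A : X →ₗ[ℂ] X) with hNdef
  have hclR : IsClosed (R : Set X) := aux_range_closed A h
  have hNc : IsClosed (N : Set X) := ContinuousLinearMap.isClosed_ker A
  haveI : CompleteSpace R := hclR.completeSpace_coe
  -- continuous projection onto R along N
  set P : X →L[ℂ] X := R.subtypeL.comp (R.linearProjOfClosedCompl N h hclR hNc) with hPdef
  have hPapply : ∀ z : X, P z = ((R.linearProjOfIsCompl N h) z : X) := by
    intro z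
    rw [hPdef]
    rfl
  have hPmem : ∀ z : X, P z ∈ R := by
    intro z; rw [hPapply]; exact ((R.linearProjOfIsCompl N h) z).2
  have hPleft : ∀ z : X, z ∈ R → P z = z := by
    intro z hz
    rw [hPapply]
    exact congrArg Subtype.val (Submodule.linearProjOfIsCompl_apply_left h ⟨z, hz⟩)
  have hPright : ∀ z : X, z ∈ N → P z = 0 := by
    intro z hz
    rw [hPapply, show (R.linearProjOfIsCompl N h) z = 0 from
      Submodule.linearProjOfIsCompl_apply_right' h hz]
    rfl
  have hAP : ∀ x : X, A (P x) = A x := by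
    intro x
    have hx : x ∈ R ⊔ N := by rw [h.sup_eq_top]; trivial
    obtain ⟨r, hr, n, hn, hrn⟩ := Submodule.mem_sup.mp hx
    have hAn : A n = 0 := hn
    rw [← hrn, map_add, hPleft r hr, hPright n hn, add_zero, map_add, hAn, add_zero]
  -- A restricted to R as an equivalence
  set A₁ : R →L[ℂ] R := (A.comp R.subtypeL).codRestrict R
    (fun r => LinearMap.mem_range_self _ (r : X)) with hA₁def
  have hA₁apply : ∀ r : R, (A₁ r : X) = A (r : X) := fun r => rfl
  have hker₁ : LinearMap.ker (A₁ : R →ₗ[ℂ] R) = ⊥ := by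
    rw [LinearMap.ker_eq_bot']
    intro r hr
    have h1 : A (r : X) = 0 := by
      have := congrArg (Subtype.val) hr
      rwa [ContinuousLinearMap.coe_coe, hA₁apply] at this
    have h2 : (r : X) ∈ R ⊓ N := ⟨r.2, h1⟩
    rw [h.inf_eq_bot] at h2
    exact Subtype.ext h2
  have hrange₁ : LinearMap.range (A₁ : R →ₗ[ℂ] R) = ⊤ := by
    rw [LinearMap.range_eq_top]
    rintro ⟨z, hz⟩
    obtain ⟨m, hm⟩ := hz
    refine ⟨⟨P m, hPmem m⟩, ?_⟩
    apply Subtype.ext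
    rw [ContinuousLinearMap.coe_coe, hA₁apply]
    show A (P m) = z
    exact (hAP m).trans hm
  set e₁ := ContinuousLinearEquiv.ofBijective A₁ hker₁ hrange₁ with he₁
  set k : ℝ := ‖(e₁.symm : R →L[ℂ] R)‖ with hkdef
  have hk0 : 0 ≤ k := norm_nonneg _
  -- bounded below on R
  have hbb : ∀ r : R, ‖(r : X)‖ ≤ k * ‖A (r : X)‖ := by
    intro r
    have h1 : e₁.symm (A₁ r) = r := e₁.symm_apply_apply r
    have h2 : ‖r‖ ≤ k * ‖A₁ r‖ := by
      conv_lhs => rw [← h1]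
      exact (e₁.symm : R →L[ℂ] R).le_opNorm (A₁ r)
    have h4 : ‖A₁ r‖ = ‖A (r : X)‖ := by rw [← hA₁apply]; rfl
    rw [h4] at h2
    exact h2
  have hbbP : ∀ x : X, ‖P x‖ ≤ k * ‖A x‖ := by
    intro x
    have h1 := hbb ⟨P x, hPmem x⟩
    simp only at h1
    rwa [hAP x] at h1
  refine ⟨1 / (2 * (k + 1)), by positivity, 2 * ‖P‖ + 1, ?_⟩
  intro μ hμ x
  have h1 : ‖μ • P x‖ ≤ (1/2) * ‖A x‖ := by
    rw [norm_smul]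
    have h2 : ‖μ‖ * ‖P x‖ ≤ (1 / (2 * (k + 1))) * (k * ‖A x‖) := by
      apply mul_le_mul hμ (hbbP x) (norm_nonneg _) (by positivity)
    have h3 : (1 / (2 * (k + 1))) * (k * ‖A x‖) ≤ (1/2) * ‖A x‖ := by
      rw [div_mul_eq_mul_div, one_mul, div_le_iff₀ (by positivity)]
      nlinarith [norm_nonneg (A x)]
    linarith
  have h4 : ‖A x‖ ≤ 2 * ‖A x - μ • P x‖ := by
    have h5 : ‖A x‖ - ‖μ • P x‖ ≤ ‖A x - μ • P x‖ := norm_sub_norm_le _ _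
    linarith
  have h6 : A x - μ • P x = P (A x - μ • x) := by
    rw [map_sub]
    rw [hPleft (A x) (LinearMap.mem_range_self _ x)]
    rw [map_smul]
  have h7 : ‖P (A x - μ • x)‖ ≤ ‖P‖ * ‖A x - μ • x‖ := P.le_opNorm _
  calc ‖A x‖ ≤ 2 * ‖A x - μ • P x‖ := h4
  _ = 2 * ‖P (A x - μ • x)‖ := by rw [h6]
  _ ≤ 2 * (‖P‖ * ‖A x - μ • x‖) := by linarith
  _ ≤ (2 * ‖P‖ + 1) * ‖A x - μ • x‖ := by nlinarith [norm_nonneg (A x - μ • x)]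

lemma aux_forward (A : X →L[ℂ] X)
    (hD : (0 : ℂ) ∈ closure
      (connectedComponentIn (resolventSet ℂ A) ((‖A‖ + 1 : ℝ) : ℂ)))
    (h : IsCompl (LinearMap.range (A : X →ₗ[ℂ] X)) (LinearMap.ker (A : X →ₗ[ℂ] X))) :
    ∃ C : Set ℂ,
      (∃ f : ℝ → ℂ, ContinuousOn f (Set.Ici (0 : ℝ)) ∧ f 0 = 0 ∧
        Tendsto (fun t => ‖f t‖) atTop atTop ∧ C = f '' Set.Ici (0 : ℝ)) ∧
      ∃ c > (0 : ℝ), ∀ x : X, ∀ μ ∈ C, c * ‖A x‖ ≤ ‖A x - μ • x‖ := by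
  obtain ⟨ε, hε, M₁, hM₁⟩ := aux_small_bound A h
  set q0 : ℂ := ((‖A‖ + 1 : ℝ) : ℂ) with hq0def
  have hq0norm : ‖q0‖ = ‖A‖ + 1 := by
    rw [hq0def, Complex.norm_real]
    exact abs_of_pos (by positivity)
  set D : Set ℂ := connectedComponentIn (resolventSet ℂ A) q0 with hDdef
  have hDsub : D ⊆ resolventSet ℂ A := connectedComponentIn_subset _ _
  have hqres : q0 ∈ resolventSet ℂ A := by
    apply aux_mem_resolvent_of_norm_lt
    rw [hq0norm]; linarith
  have hqD : q0 ∈ D := mem_connectedComponentIn hqres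
  obtain ⟨p, hpD, hpdist⟩ := Metric.mem_closure_iff.mp hD ε hε
  have hpnorm : ‖p‖ ≤ ε := by
    rw [dist_zero_left] at hpdist
    exact hpdist.le
  -- a path in D from p to q0
  have hDopen : IsOpen D := (spectrum.isOpen_resolventSet A).connectedComponentIn
  have hDconn : IsConnected D := isConnected_connectedComponentIn_iff.mpr hqres
  have hDpath : IsPathConnected D := hDopen.isConnected_iff_isPathConnected.mp hDconn
  obtain ⟨γ, hγ⟩ := hDpath.joinedIn p hpD q0 hqD
  -- the middle bound
  have hunit_s : ∀ s : unitInterval, IsUnit (A - γ s • (1 : X →L[ℂ] X)) := by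
    intro s
    have h1 := hDsub (hγ s)
    rw [spectrum.mem_resolventSet_iff] at h1
    have h2 := h1.neg
    rwa [Algebra.algebraMap_eq_smul_one, neg_sub] at h2
  have hbase : Continuous (fun s : unitInterval => A - γ s • (1 : X →L[ℂ] X)) :=
    continuous_const.sub ((γ.continuous).smul continuous_const)
  have hcont_inv : Continuous
      (fun s : unitInterval => ‖A * Ring.inverse (A - γ s • (1 : X →L[ℂ] X))‖) := by
    rw [continuous_iff_continuousAt]
    intro s
    have h1 : ContinuousAt Ring.inverse (A - γ s • (1 : X →L[ℂ] X)) := by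
      have h2 := NormedRing.inverse_continuousAt (hunit_s s).unit
      rwa [(hunit_s s).unit_spec] at h2
    have h2 : ContinuousAt (fun s : unitInterval => Ring.inverse (A - γ s • (1 : X →L[ℂ] X))) s :=
      Filter.Tendsto.comp h1 hbase.continuousAt
    exact (continuousAt_const.mul h2).norm
  obtain ⟨s₀, -, hs₀⟩ := isCompact_univ.exists_isMaxOn univ_nonempty hcont_inv.continuousOn
  set M₂ : ℝ := ‖A * Ring.inverse (A - γ s₀ • (1 : X →L[ℂ] X))‖ with hM₂def
  have hmid : ∀ s : unitInterval, ∀ x : X, ‖A x‖ ≤ M₂ * ‖A x - γ s • x‖ := by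
    intro s x
    have hu := hunit_s s
    set B : X →L[ℂ] X := A * Ring.inverse (A - γ s • (1 : X →L[ℂ] X)) with hBdef
    set T : X →L[ℂ] X := A - γ s • (1 : X →L[ℂ] X) with hTdef
    have h2 : B * T = A := by
      rw [hBdef, mul_assoc, Ring.inverse_mul_cancel _ hu, mul_one]
    have h3 : T x = A x - γ s • x := by
      rw [hTdef]; simp [sub_apply, smul_apply, one_apply]
    have hBle : ‖B‖ ≤ M₂ := hs₀ (mem_univ s)
    calc ‖A x‖ = ‖B (T x)‖ := by rw [← mul_apply_eq_comp, h2]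
    _ ≤ ‖B‖ * ‖T x‖ := le_opNorm _ _
    _ ≤ M₂ * ‖T x‖ := mul_le_mul_of_nonneg_right hBle (norm_nonneg _)
    _ = M₂ * ‖A x - γ s • x‖ := by rw [h3]
  -- the tail bound
  have htail : ∀ μ : ℂ, ‖A‖ + 1 ≤ ‖μ‖ → ∀ x : X, ‖A x‖ ≤ ‖A‖ * ‖A x - μ • x‖ := by
    intro μ hμ x
    have h1 : ‖x‖ ≤ ‖A x - μ • x‖ := by
      have h2 : ‖μ • x‖ - ‖A x‖ ≤ ‖μ • x - A x‖ := norm_sub_norm_le _ _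
      rw [← norm_sub_rev] at h2
      have h3 : ‖A x‖ ≤ ‖A‖ * ‖x‖ := A.le_opNorm x
      rw [norm_smul] at h2
      nlinarith [norm_nonneg x]
    calc ‖A x‖ ≤ ‖A‖ * ‖x‖ := A.le_opNorm x
    _ ≤ ‖A‖ * ‖A x - μ • x‖ := mul_le_mul_of_nonneg_left h1 (norm_nonneg A)
  -- the curve
  set f : ℝ → ℂ := fun t =>
    if t ≤ 1 then (t : ℂ) * p else if t ≤ 2 then γ.extend (t - 1) else ((t : ℂ) - 1) * q0
    with hfdef
  have hf_cont : Continuous f := by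
    apply Continuous.if_le
    · exact (Complex.continuous_ofReal).mul continuous_const
    · apply Continuous.if_le
      · exact γ.continuous_extend.comp (continuous_id.sub continuous_const)
      · exact ((Complex.continuous_ofReal).sub continuous_const).mul continuous_const
      · exact continuous_id
      · exact continuous_const
      · intro t ht
        have ht2 : t = 2 := ht
        rw [ht2]
        norm_num [Path.extend_one]
    · exact continuous_id
    · exact continuous_const
    · intro t ht
      have ht1 : t = 1 := ht
      rw [ht1]
      have : (1:ℝ) ≤ 2 := by norm_num
      simp only [this, if_pos]
      norm_num [Path.extend_zero]
  have hf0 : f 0 = 0 := by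
    rw [hfdef]
    norm_num
  have hftop : Tendsto (fun t => ‖f t‖) atTop atTop := by
    have hval : ∀ t : ℝ, 3 ≤ t → t - 1 ≤ ‖f t‖ := by
      intro t ht
      have h1 : ¬ t ≤ 1 := by linarith
      have h2 : ¬ t ≤ 2 := by linarith
      rw [hfdef]
      simp only [h1, h2, if_false]
      have h3 : ((t : ℂ) - 1) = ((t - 1 : ℝ) : ℂ) := by push_cast; ring
      rw [h3, norm_mul, Complex.norm_real, Real.norm_eq_abs, hq0norm]
      have h4 : |t - 1| = t - 1 := abs_of_pos (by linarith)
      rw [h4]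
      nlinarith [norm_nonneg A]
    apply tendsto_atTop_mono' _ ((eventually_ge_atTop (3:ℝ)).mono hval)
    have h5 : Tendsto (fun t : ℝ => t + (-1)) atTop atTop :=
      tendsto_atTop_add_const_right _ _ tendsto_id
    simpa [sub_eq_add_neg] using h5
  refine ⟨f '' Ici 0, ⟨f, hf_cont.continuousOn, hf0, hftop, rfl⟩, ?_⟩
  -- assemble the constant
  set M : ℝ := max (max (max M₁ M₂) ‖A‖) 1 with hMdef
  have hM1 : (1:ℝ) ≤ M := le_max_right _ 1
  have hMpos : (0:ℝ) < M := lt_of_lt_of_le one_pos hM1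
  refine ⟨M⁻¹, inv_pos.mpr hMpos, ?_⟩
  rintro x μ ⟨t, ht0, rfl⟩
  rw [inv_mul_le_iff₀ hMpos]
  have hM₁le : M₁ ≤ M := le_trans (le_max_left _ _) (le_trans (le_max_left _ _) (le_max_left _ 1))
  have hM₂le : M₂ ≤ M := le_trans (le_max_right _ _) (le_trans (le_max_left _ _) (le_max_left _ 1))
  have hAle : ‖A‖ ≤ M := le_trans (le_max_right _ _) (le_max_left _ 1)
  have hnn : (0:ℝ) ≤ ‖A x - f t • x‖ := norm_nonneg _
  by_cases ht1 : t ≤ 1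
  · have hft : f t = (t : ℂ) * p := by rw [hfdef]; simp [ht1]
    have hft_norm : ‖f t‖ ≤ ε := by
      rw [hft, norm_mul, Complex.norm_real, Real.norm_eq_abs]
      have h1 : |t| ≤ 1 := abs_le.mpr ⟨by linarith [mem_Ici.mp ht0], ht1⟩
      nlinarith [norm_nonneg p, abs_nonneg t]
    have hb1 : ‖A x‖ ≤ M₁ * ‖A x - f t • x‖ := hM₁ (f t) hft_norm x
    have hb2 : M₁ * ‖A x - f t • x‖ ≤ M * ‖A x - f t • x‖ :=
      mul_le_mul_of_nonneg_right hM₁le hnn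
    linarith
  · by_cases ht2 : t ≤ 2
    · have hmem : t - 1 ∈ Icc (0:ℝ) 1 := ⟨by linarith [not_le.mp ht1], by linarith⟩
      have hft : f t = γ ⟨t - 1, hmem⟩ := by
        rw [hfdef]
        simp only [ht1, if_false, ht2, if_true]
        exact γ.extend_extends' ⟨t - 1, hmem⟩
      have hb1 : ‖A x‖ ≤ M₂ * ‖A x - f t • x‖ := by rw [hft]; exact hmid _ x
      have hb2 : M₂ * ‖A x - f t • x‖ ≤ M * ‖A x - f t • x‖ :=
        mul_le_mul_of_nonneg_right hM₂le hnn
      linarith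
    · have hft : f t = ((t : ℂ) - 1) * q0 := by rw [hfdef]; simp [ht1, ht2]
      have hft_norm : ‖A‖ + 1 ≤ ‖f t‖ := by
        rw [hft, norm_mul]
        have h3 : ((t : ℂ) - 1) = ((t - 1 : ℝ) : ℂ) := by push_cast; ring
        rw [h3, Complex.norm_real, Real.norm_eq_abs, hq0norm]
        have h4 : (1:ℝ) ≤ |t - 1| := by
          rw [abs_of_pos (by linarith [not_le.mp ht2])]
          linarith [not_le.mp ht2]
        nlinarith [norm_nonneg A]
      have hb1 : ‖A x‖ ≤ ‖A‖ * ‖A x - f t • x‖ := htail (f t) hft_norm x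
      have hb2 : ‖A‖ * ‖A x - f t • x‖ ≤ M * ‖A x - f t • x‖ :=
        mul_le_mul_of_nonneg_right hAle hnn
      linarith

end Aux

/-- Main theorem: if `0` is in the closure of the unbounded component `D∞` of the
resolvent set of `A`, then `X = R(A) ⊕ N(A)` iff `R(A)` is closed and there is an
unbounded curve `C` emanating from the origin with `φ_C(A) < π`. -/
theorem stmt_2 {X : Type*} [NormedAddCommGroup X] [NormedSpace ℂ X] [CompleteSpace X]
    (A : X →L[ℂ] X)
    (hD : (0 : ℂ) ∈ closure
      (connectedComponentIn (resolventSet ℂ A) ((‖A‖ + 1 : ℝ) : ℂ))) :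
    IsCompl (LinearMap.range (A : X →ₗ[ℂ] X)) (LinearMap.ker (A : X →ₗ[ℂ] X)) ↔
      (IsClosed ((LinearMap.range (A : X →ₗ[ℂ] X) : Submodule ℂ X) : Set X) ∧
        ∃ C : Set ℂ,
          (∃ f : ℝ → ℂ, ContinuousOn f (Set.Ici (0 : ℝ)) ∧ f 0 = 0 ∧
            Tendsto (fun t => ‖f t‖) atTop atTop ∧ C = f '' Set.Ici (0 : ℝ)) ∧
          ∃ c > (0 : ℝ), ∀ x : X, ∀ μ ∈ C, c * ‖A x‖ ≤ ‖A x - μ • x‖) := by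
  constructor
  · intro h
    exact ⟨aux_range_closed A h, aux_forward A hD h⟩
  · rintro ⟨hcl, C, ⟨f, hfc, hf0, hft, rfl⟩, c, hc, hest⟩
    apply aux_backward A hcl f hfc hf0 hft hc
    intro x t ht
    exact hest x (f t) ⟨t, ht, rfl⟩
end

section
/- Let X be a complex Banach space and A : X → X a bounded linear operator such that 0 belongs to the closure of D∞, the unbounded component of the resolvent set of A. If X = R(A) ⊕ N(A), then R(A) is closed and there exists an unbounded curve C emanating from the origin and a constant c > 0 such that ‖Ax − λx‖ ≥ c‖Ax‖ for all x ∈ X and all λ ∈ C (i.e., φ_C(A) < π). -/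
open Filter Set

set_option linter.unusedSectionVars false

section aux
variable {X : Type*} [NormedAddCommGroup X] [NormedSpace ℂ X] [CompleteSpace X]

/-- The induced map on the quotient by the kernel, as a continuous linear equiv. -/
theorem aux_quot (A : X →L[ℂ] X)
    (hcompl : IsCompl (LinearMap.range (A : X →ₗ[ℂ] X)) (LinearMap.ker (A : X →ₗ[ℂ] X))) :
    IsClosed ((LinearMap.range (A : X →ₗ[ℂ] X) : Submodule ℂ X) : Set X) := by
  set N : Submodule ℂ X := LinearMap.ker (A : X →ₗ[ℂ] X) with hN
  haveI hNc : IsClosed (N : Set X) := ContinuousLinearMap.isClosed_ker A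
  set L : X →ₗ[ℂ] X ⧸ N := N.mkQ.comp (A : X →ₗ[ℂ] X) with hL
  have hLN : N ≤ LinearMap.ker L := by
    intro x hx
    have hx0 : A x = 0 := hx
    simp [hL, hx0]
  set Ahat₀ : X ⧸ N →ₗ[ℂ] X ⧸ N := N.liftQ L hLN with hAhat₀
  have hcont : Continuous Ahat₀ := by
    rw [(Submodule.isOpenQuotientMap_mkQ N).isQuotientMap.continuous_iff]
    have : (Ahat₀ ∘ N.mkQ) = fun x => N.mkQ (A x) := by
      funext x; simp [hAhat₀, hL, Submodule.mkQ_apply]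
    rw [this]
    exact (Submodule.isOpenQuotientMap_mkQ N).continuous.comp A.continuous
  set Ahat : X ⧸ N →L[ℂ] X ⧸ N := ⟨Ahat₀, hcont⟩ with hAhat
  have happ : ∀ x : X, Ahat (N.mkQ x) = N.mkQ (A x) := by
    intro x; simp [hAhat, hAhat₀, hL, Submodule.mkQ_apply]
  have hker : LinearMap.ker (Ahat : X ⧸ N →ₗ[ℂ] X ⧸ N) = ⊥ := by
    rw [LinearMap.ker_eq_bot']
    intro m hm
    obtain ⟨x, rfl⟩ := N.mkQ_surjective m
    have : N.mkQ (A x) = 0 := by rw [← happ x]; exact hm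
    have hAxN : A x ∈ N := by rwa [Submodule.mkQ_apply, Submodule.Quotient.mk_eq_zero] at this
    have hAxR : A x ∈ LinearMap.range (A : X →ₗ[ℂ] X) := ⟨x, rfl⟩
    have hx : A x = 0 := by
      have := hcompl.disjoint
      rw [Submodule.disjoint_def] at this
      exact this _ hAxR hAxN
    have : x ∈ N := hx
    rwa [Submodule.mkQ_apply, Submodule.Quotient.mk_eq_zero]
  have hrange : LinearMap.range (Ahat : X ⧸ N →ₗ[ℂ] X ⧸ N) = ⊤ := by
    rw [LinearMap.range_eq_top]
    intro m
    obtain ⟨x, rfl⟩ := N.mkQ_surjective m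
    have hx : x ∈ LinearMap.range (A : X →ₗ[ℂ] X) ⊔ N := by
      rw [hcompl.codisjoint.eq_top]; trivial
    obtain ⟨r, hr, n, hn, hx⟩ := Submodule.mem_sup.mp hx
    obtain ⟨w, rfl⟩ := hr
    refine ⟨N.mkQ w, ?_⟩
    simp only [ContinuousLinearMap.coe_coe] at hx ⊢
    rw [happ w, ← hx]
    have h0 : N.mkQ n = 0 := by
      rw [Submodule.mkQ_apply, Submodule.Quotient.mk_eq_zero]; exact hn
    rw [map_add, h0, add_zero]
  set e := ContinuousLinearEquiv.ofBijective Ahat hker hrange with he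
  have heapp : ∀ m : X ⧸ N, e m = Ahat m := fun m => rfl
  -- now show the range is closed
  refine isClosed_of_closure_subset ?_
  intro y hy
  obtain ⟨u, hu, hulim⟩ := mem_closure_iff_seq_limit.mp hy
  choose v hv using hu
  simp only [ContinuousLinearMap.coe_coe] at hv
  -- mk (v n) → e.symm (mk y)
  have h1 : Tendsto (fun n => N.mkQ (u n)) atTop (nhds (N.mkQ y)) :=
    ((Submodule.isOpenQuotientMap_mkQ N).continuous.tendsto y).comp hulim
  have h2 : ∀ n, N.mkQ (u n) = e (N.mkQ (v n)) := by
    intro n; rw [heapp, happ, hv]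
  have h3 : Tendsto (fun n => N.mkQ (v n)) atTop (nhds (e.symm (N.mkQ y))) := by
    have := (e.symm.continuous.tendsto (N.mkQ y)).comp h1
    simpa [Function.comp_def, h2, ContinuousLinearEquiv.symm_apply_apply] using this
  obtain ⟨x₀, hx₀⟩ := N.mkQ_surjective (e.symm (N.mkQ y))
  rw [← hx₀] at h3
  -- norms of mk (v n - x₀) tend to 0
  have h4 : Tendsto (fun n => ‖N.mkQ (v n - x₀)‖) atTop (nhds 0) := by
    have := tendsto_iff_norm_sub_tendsto_zero.mp h3
    simpa [map_sub] using this
  -- choose good representatives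
  have h5 : ∀ n : ℕ, ∃ w : X, Submodule.Quotient.mk w = N.mkQ (v n - x₀) ∧
      ‖w‖ < ‖N.mkQ (v n - x₀)‖ + 1 / (n + 1) := by
    intro n
    exact Submodule.Quotient.norm_mk_lt _ (by positivity)
  choose w hw hwn using h5
  have hw0 : Tendsto w atTop (nhds 0) := by
    apply squeeze_zero_norm (fun n => le_of_lt (hwn n))
    have : Tendsto (fun n : ℕ => (1 : ℝ) / (n + 1)) atTop (nhds 0) :=
      tendsto_one_div_add_atTop_nhds_zero_nat
    simpa using h4.add this
  have hAw : ∀ n, A (w n) = A (v n) - A x₀ := by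
    intro n
    have hmem : w n - (v n - x₀) ∈ N :=
      (Submodule.Quotient.eq N).mp (by rw [hw n, Submodule.mkQ_apply])
    have h0 : A (w n - (v n - x₀)) = 0 := hmem
    have := sub_eq_zero.mp (by simpa [map_sub] using h0)
    exact this
  have h6 : Tendsto (fun n => A (v n)) atTop (nhds (A x₀)) := by
    have hAw0 : Tendsto (fun n => A (w n)) atTop (nhds 0) := by
      have := (A.continuous.tendsto 0).comp hw0
      simpa [Function.comp_def] using this
    have : Tendsto (fun n => A (w n) + A x₀) atTop (nhds (0 + A x₀)) :=
      hAw0.add tendsto_const_nhds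
    simpa [hAw, sub_add_cancel] using this
  have h7 : Tendsto u atTop (nhds (A x₀)) := by
    simpa [hv] using h6
  have : y = A x₀ := tendsto_nhds_unique hulim h7
  exact ⟨x₀, this.symm⟩


theorem aux_bddBelow (A : X →L[ℂ] X)
    (hcompl : IsCompl (LinearMap.range (A : X →ₗ[ℂ] X)) (LinearMap.ker (A : X →ₗ[ℂ] X)))
    (hcl : IsClosed ((LinearMap.range (A : X →ₗ[ℂ] X) : Submodule ℂ X) : Set X)) :
    ∃ m > (0 : ℝ), ∀ x ∈ LinearMap.range (A : X →ₗ[ℂ] X), m * ‖x‖ ≤ ‖A x‖ := by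
  set R : Submodule ℂ X := LinearMap.range (A : X →ₗ[ℂ] X) with hR
  haveI : CompleteSpace R := hcl.completeSpace_coe
  set B : R →L[ℂ] R := (A.comp R.subtypeL).codRestrict R (fun r => ⟨r, rfl⟩) with hB
  have hBapp : ∀ r : R, (B r : X) = A r := fun r => rfl
  have hker : LinearMap.ker (B : R →ₗ[ℂ] R) = ⊥ := by
    rw [LinearMap.ker_eq_bot']
    intro r hr
    have h1 : A (r : X) = 0 := by rw [← hBapp r, show B r = 0 from hr]; rfl
    have h2 : (r : X) ∈ LinearMap.ker (A : X →ₗ[ℂ] X) := h1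
    have h3 : (r : X) = 0 := by
      have := hcompl.disjoint
      rw [Submodule.disjoint_def] at this
      exact this _ r.2 h2
    exact Subtype.ext h3
  have hrange : LinearMap.range (B : R →ₗ[ℂ] R) = ⊤ := by
    rw [LinearMap.range_eq_top]
    intro y
    obtain ⟨x, hx⟩ := y.2
    have hxmem : x ∈ R ⊔ LinearMap.ker (A : X →ₗ[ℂ] X) := by
      rw [hcompl.codisjoint.eq_top]; trivial
    obtain ⟨r, hr, n, hn, hrn⟩ := Submodule.mem_sup.mp hxmem
    refine ⟨⟨r, hr⟩, Subtype.ext ?_⟩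
    have hAn : A n = 0 := hn
    have : A x = A r + A n := by rw [← map_add, hrn]
    rw [ContinuousLinearMap.coe_coe, hBapp, show ((y : R) : X) = A x from hx.symm, this, hAn, add_zero]
  set e := ContinuousLinearEquiv.ofBijective B hker hrange with he
  set c : ℝ := ‖(e.symm : R →L[ℂ] R)‖ + 1 with hc
  have hcpos : (0 : ℝ) < c := by positivity
  refine ⟨c⁻¹, by positivity, ?_⟩
  intro x hx
  set r : R := ⟨x, hx⟩ with hr
  have h1 : ‖r‖ ≤ c * ‖B r‖ := by
    have h2 : e.symm (e r) = r := e.symm_apply_apply r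
    have h3 : e r = B r := rfl
    calc ‖r‖ = ‖e.symm (B r)‖ := by rw [← h3, h2]
    _ ≤ ‖(e.symm : R →L[ℂ] R)‖ * ‖B r‖ := (e.symm : R →L[ℂ] R).le_opNorm _
    _ ≤ c * ‖B r‖ := by have := norm_nonneg (B r); nlinarith
  have h4 : ‖B r‖ = ‖A x‖ := rfl
  have h5 : ‖r‖ = ‖x‖ := rfl
  rw [h4, h5] at h1
  calc c⁻¹ * ‖x‖ ≤ c⁻¹ * (c * ‖A x‖) :=
        mul_le_mul_of_nonneg_left h1 (by positivity)
  _ = ‖A x‖ := by field_simp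

theorem aux_K (A : X →L[ℂ] X)
    (hcompl : IsCompl (LinearMap.range (A : X →ₗ[ℂ] X)) (LinearMap.ker (A : X →ₗ[ℂ] X)))
    (hcl : IsClosed ((LinearMap.range (A : X →ₗ[ℂ] X) : Submodule ℂ X) : Set X)) :
    ∃ K > (0 : ℝ), ∀ r ∈ LinearMap.range (A : X →ₗ[ℂ] X), ∀ n ∈ LinearMap.ker (A : X →ₗ[ℂ] X),
      ‖r‖ ≤ K * ‖r + n‖ := by
  set R : Submodule ℂ X := LinearMap.range (A : X →ₗ[ℂ] X) with hRdef
  set N : Submodule ℂ X := LinearMap.ker (A : X →ₗ[ℂ] X) with hNdef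
  have hclN : IsClosed (N : Set X) := ContinuousLinearMap.isClosed_ker A
  set e := Submodule.prodEquivOfClosedCompl R N hcompl hcl hclN with he
  set K : ℝ := ‖(e.symm : X →L[ℂ] R × N)‖ + 1 with hK
  refine ⟨K, by positivity, ?_⟩
  intro r hr n hn
  set p : R × N := (⟨r, hr⟩, ⟨n, hn⟩) with hp
  have h1 : e p = r + n := rfl
  have h2 : p = e.symm (r + n) := by rw [← h1, e.symm_apply_apply]
  calc ‖r‖ = ‖(p.1 : X)‖ := rfl
  _ ≤ ‖p‖ := norm_fst_le p
  _ = ‖e.symm (r + n)‖ := by rw [← h2]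
  _ ≤ ‖(e.symm : X →L[ℂ] R × N)‖ * ‖r + n‖ := (e.symm : X →L[ℂ] R × N).le_opNorm _
  _ ≤ K * ‖r + n‖ := by have := norm_nonneg (r + n); nlinarith


theorem aux_resolvent (A : X →L[ℂ] X) {μ : ℂ} (hμ : μ ∈ resolventSet ℂ A) (x : X) :
    ‖x‖ ≤ ‖Ring.inverse ((algebraMap ℂ (X →L[ℂ] X)) μ - A)‖ * ‖A x - μ • x‖ := by
  have hu : IsUnit ((algebraMap ℂ (X →L[ℂ] X)) μ - A) := hμ
  set u := hu.unit with husp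
  have hspec : (u : X →L[ℂ] X) = (algebraMap ℂ (X →L[ℂ] X)) μ - A := hu.unit_spec
  have hRi : Ring.inverse ((algebraMap ℂ (X →L[ℂ] X)) μ - A) = ((u⁻¹ : (X →L[ℂ] X)ˣ) : X →L[ℂ] X) := by
    rw [← hspec, Ring.inverse_unit]
  have hux : (u : X →L[ℂ] X) x = μ • x - A x := by
    rw [hspec, Algebra.algebraMap_eq_smul_one]
    simp [ContinuousLinearMap.sub_apply, ContinuousLinearMap.smul_apply]
  have hx : x = ((u⁻¹ : (X →L[ℂ] X)ˣ) : X →L[ℂ] X) ((u : X →L[ℂ] X) x) := by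
    have h1 : ((u⁻¹ : (X →L[ℂ] X)ˣ) : X →L[ℂ] X) * (u : X →L[ℂ] X) = 1 := u.inv_mul
    calc x = ((1 : X →L[ℂ] X)) x := rfl
    _ = (((u⁻¹ : (X →L[ℂ] X)ˣ) : X →L[ℂ] X) * (u : X →L[ℂ] X)) x := by rw [h1]
    _ = ((u⁻¹ : (X →L[ℂ] X)ˣ) : X →L[ℂ] X) ((u : X →L[ℂ] X) x) := rfl
  calc ‖x‖ = ‖((u⁻¹ : (X →L[ℂ] X)ˣ) : X →L[ℂ] X) ((u : X →L[ℂ] X) x)‖ := by rw [← hx]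
  _ ≤ ‖((u⁻¹ : (X →L[ℂ] X)ˣ) : X →L[ℂ] X)‖ * ‖(u : X →L[ℂ] X) x‖ :=
      ContinuousLinearMap.le_opNorm _ _
  _ = ‖Ring.inverse ((algebraMap ℂ (X →L[ℂ] X)) μ - A)‖ * ‖A x - μ • x‖ := by
      rw [hRi, hux, norm_sub_rev]

theorem aux_res_cont (A : X →L[ℂ] X) : ContinuousOn
    (fun μ : ℂ => ‖Ring.inverse ((algebraMap ℂ (X →L[ℂ] X)) μ - A)‖) (resolventSet ℂ A) := by
  intro μ hμ
  have hu : IsUnit ((algebraMap ℂ (X →L[ℂ] X)) μ - A) := hμ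
  have hcont1 : Continuous (fun ν : ℂ => (algebraMap ℂ (X →L[ℂ] X)) ν - A) :=
    (continuous_algebraMap ℂ (X →L[ℂ] X)).sub continuous_const
  have h2 : ContinuousAt Ring.inverse ((algebraMap ℂ (X →L[ℂ] X)) μ - A) := by
    rw [← hu.unit_spec]
    exact NormedRing.inverse_continuousAt hu.unit
  have h3 := ContinuousAt.comp (x := μ) h2 hcont1.continuousAt
  rw [Function.comp_def] at h3
  exact h3.norm.continuousWithinAt


theorem aux_main (A : X →L[ℂ] X)
    (hD : (0 : ℂ) ∈ closure
      (connectedComponentIn (resolventSet ℂ A) ((‖A‖ + 1 : ℝ) : ℂ)))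
    (hcompl : IsCompl (LinearMap.range (A : X →ₗ[ℂ] X)) (LinearMap.ker (A : X →ₗ[ℂ] X)))
    (hclosed : IsClosed ((LinearMap.range (A : X →ₗ[ℂ] X) : Submodule ℂ X) : Set X))
    (hmK : (∃ m > (0 : ℝ), ∀ x ∈ LinearMap.range (A : X →ₗ[ℂ] X), m * ‖x‖ ≤ ‖A x‖) ∧
      (∃ K > (0 : ℝ), ∀ r ∈ LinearMap.range (A : X →ₗ[ℂ] X), ∀ n ∈ LinearMap.ker (A : X →ₗ[ℂ] X), ‖r‖ ≤ K * ‖r + n‖))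
    (hres : ∀ {μ : ℂ}, μ ∈ resolventSet ℂ A → ∀ x : X,
      ‖x‖ ≤ ‖Ring.inverse ((algebraMap ℂ (X →L[ℂ] X)) μ - A)‖ * ‖A x - μ • x‖)
    (hrescont : ContinuousOn
      (fun μ : ℂ => ‖Ring.inverse ((algebraMap ℂ (X →L[ℂ] X)) μ - A)‖) (resolventSet ℂ A))
    (hA0 : A ≠ 0) :
    ∃ C : Set ℂ,
        (∃ f : ℝ → ℂ, ContinuousOn f (Set.Ici (0 : ℝ)) ∧ f 0 = 0 ∧
          Tendsto (fun t => ‖f t‖) atTop atTop ∧ C = f '' Set.Ici (0 : ℝ)) ∧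
        ∃ c > (0 : ℝ), ∀ x : X, ∀ μ ∈ C, c * ‖A x‖ ≤ ‖A x - μ • x‖ := by
  obtain ⟨⟨m, hm, hmlb⟩, ⟨K, hK, hKineq⟩⟩ := hmK
  have hApos : (0 : ℝ) < ‖A‖ := norm_pos_iff.mpr hA0
  -- a nontrivial space
  obtain ⟨x₁, hx₁⟩ := DFunLike.ne_iff.mp hA0
  have hx₁' : A x₁ ≠ 0 := by simpa using hx₁
  haveI : Nontrivial X := ⟨⟨A x₁, 0, hx₁'⟩⟩
  set a : ℂ := ((‖A‖ + 1 : ℝ) : ℂ) with ha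
  have ha_norm : ‖a‖ = ‖A‖ + 1 := by
    rw [ha, Complex.norm_real, Real.norm_eq_abs, abs_of_nonneg (by positivity)]
  have ha_res : a ∈ resolventSet ℂ A := by
    by_contra h
    have hsp : a ∈ spectrum ℂ A := h
    have := spectrum.norm_le_norm_of_mem hsp
    rw [ha_norm] at this; linarith
  set D : Set ℂ := connectedComponentIn (resolventSet ℂ A) a with hDdef
  have hopen : IsOpen D := (spectrum.isOpen_resolventSet A).connectedComponentIn
  have hsub : D ⊆ resolventSet ℂ A := connectedComponentIn_subset _ _
  have haD : a ∈ D := mem_connectedComponentIn ha_res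
  -- a point of D close to 0
  rw [Metric.mem_closure_iff] at hD
  obtain ⟨lam0, hlam0D, hdist⟩ := hD (m / 2) (by positivity)
  have hlamnorm : ‖lam0‖ < m / 2 := by rwa [dist_comm, dist_zero_right] at hdist
  -- a path from lam0 to a inside D
  have hconn : IsConnected D := isConnected_connectedComponentIn_iff.mpr ha_res
  have hpc : IsPathConnected D := hopen.isConnected_iff_isPathConnected.mp hconn
  obtain ⟨γ, hγ⟩ := hpc.joinedIn lam0 hlam0D a haD
  -- sup of the resolvent norm on the path
  have hrangesub : range γ ⊆ resolventSet ℂ A := by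
    rintro w ⟨t, rfl⟩; exact hsub (hγ t)
  obtain ⟨z, hz, hzmax⟩ := (isCompact_range γ.continuous).exists_isMaxOn
    ⟨γ 0, mem_range_self 0⟩ (hrescont.mono hrangesub)
  set M : ℝ := ‖Ring.inverse ((algebraMap ℂ (X →L[ℂ] X)) z - A)‖ with hM
  have hM0 : (0 : ℝ) ≤ M := norm_nonneg _
  -- the constant
  set c : ℝ := min ((2 * K)⁻¹) (min ((‖A‖ * (M + 1))⁻¹) ‖A‖⁻¹) with hc
  have hcpos : (0 : ℝ) < c := by
    rw [hc]; positivity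
  -- the curve
  set f : ℝ → ℂ := fun t =>
    if t ≤ 1 then (t : ℂ) * lam0 else if t ≤ 2 then γ.extend (t - 1)
      else ((t - 1 : ℝ) : ℂ) * a with hf
  have hfcont : Continuous f := by
    rw [hf]
    apply Continuous.if_le
    · exact Complex.continuous_ofReal.mul continuous_const
    · apply Continuous.if_le
      · exact γ.continuous_extend.comp (continuous_id.sub continuous_const)
      · exact (Complex.continuous_ofReal.comp (continuous_id.sub continuous_const)).mul
          continuous_const
      · exact continuous_id
      · exact continuous_const
      · intro t ht
        rw [ht]
        norm_num [Path.extend_one]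
    · exact continuous_id
    · exact continuous_const
    · intro t ht
      rw [ht]
      rw [if_pos (by norm_num : (1:ℝ) ≤ 2)]
      norm_num [Path.extend_zero]
  have hf0 : f 0 = 0 := by
    rw [hf]; norm_num
  have htends : Tendsto (fun t => ‖f t‖) atTop atTop := by
    apply tendsto_atTop_mono' atTop ?_ (tendsto_atTop_add_const_right atTop (-1) tendsto_id)
    filter_upwards [eventually_ge_atTop (3 : ℝ)] with t ht
    have h1 : ¬ t ≤ 1 := by linarith
    have h2 : ¬ t ≤ 2 := by linarith
    rw [hf]
    simp only [h1, h2, if_false]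
    rw [norm_mul, Complex.norm_real, ha_norm, Real.norm_eq_abs,
      abs_of_nonneg (by linarith : (0:ℝ) ≤ t - 1)]
    have h4 : (t - 1) * 1 ≤ (t - 1) * (‖A‖ + 1) :=
      mul_le_mul_of_nonneg_left (by linarith) (by linarith)
    simp only [id_eq]
    linarith
  refine ⟨f '' Set.Ici 0, ⟨f, hfcont.continuousOn, hf0, htends, rfl⟩, c, hcpos, ?_⟩
  -- the three regimes
  have hsmall : ∀ μ : ℂ, ‖μ‖ ≤ m / 2 → ∀ x : X, c * ‖A x‖ ≤ ‖A x - μ • x‖ := by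
    intro μ hμ x
    have hxmem : x ∈ LinearMap.range (A : X →ₗ[ℂ] X) ⊔ LinearMap.ker (A : X →ₗ[ℂ] X) := by
      rw [hcompl.codisjoint.eq_top]; trivial
    obtain ⟨r, hr, n, hn, hrn⟩ := Submodule.mem_sup.mp hxmem
    have hAn : A n = 0 := hn
    have hAx : A x = A r := by rw [← hrn, map_add, hAn, add_zero]
    have hr' : A r - μ • r ∈ LinearMap.range (A : X →ₗ[ℂ] X) :=
      Submodule.sub_mem _ ⟨r, rfl⟩ (Submodule.smul_mem _ _ hr)
    have hn' : -(μ • n) ∈ LinearMap.ker (A : X →ₗ[ℂ] X) :=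
      Submodule.neg_mem _ (Submodule.smul_mem _ _ hn)
    have hsum : (A r - μ • r) + (-(μ • n)) = A x - μ • x := by
      rw [hAx, ← hrn, smul_add]; abel
    have hKi := hKineq _ hr' _ hn'
    rw [hsum] at hKi
    have hsmul : ‖μ • r‖ ≤ (1 / 2) * ‖A r‖ := by
      rw [norm_smul]
      have h1 : ‖μ‖ * ‖r‖ ≤ (m / 2) * ‖r‖ :=
        mul_le_mul_of_nonneg_right hμ (norm_nonneg _)
      have h2 : m * ‖r‖ ≤ ‖A r‖ := hmlb r hr
      linarith
    have hlow : (1 / 2) * ‖A r‖ ≤ ‖A r - μ • r‖ := by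
      have := norm_sub_norm_le (A r) (μ • r)
      linarith
    have hmain : ‖A r‖ ≤ (2 * K) * ‖A x - μ • x‖ := by nlinarith
    have hc1 : c ≤ (2 * K)⁻¹ := min_le_left _ _
    calc c * ‖A x‖ ≤ (2 * K)⁻¹ * ‖A x‖ :=
          mul_le_mul_of_nonneg_right hc1 (norm_nonneg _)
    _ = (2 * K)⁻¹ * ‖A r‖ := by rw [hAx]
    _ ≤ (2 * K)⁻¹ * ((2 * K) * ‖A x - μ • x‖) :=
          mul_le_mul_of_nonneg_left hmain (by positivity)
    _ = ‖A x - μ • x‖ := by field_simp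
  have hmid : ∀ μ ∈ range γ, ∀ x : X, c * ‖A x‖ ≤ ‖A x - μ • x‖ := by
    intro μ hμ x
    have hresμ : μ ∈ resolventSet ℂ A := hrangesub hμ
    have h1 : ‖x‖ ≤ M * ‖A x - μ • x‖ := by
      have h2 := hres hresμ x
      have h3 : ‖Ring.inverse ((algebraMap ℂ (X →L[ℂ] X)) μ - A)‖ ≤ M := hzmax hμ
      have h4 := norm_nonneg (A x - μ • x)
      nlinarith
    have h5 : ‖A x‖ ≤ ‖A‖ * ‖x‖ := A.le_opNorm x
    have h6 : ‖A x‖ ≤ (‖A‖ * (M + 1)) * ‖A x - μ • x‖ := by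
      have h7 := norm_nonneg (A x - μ • x)
      nlinarith
    have hc2 : c ≤ (‖A‖ * (M + 1))⁻¹ := le_trans (min_le_right _ _) (min_le_left _ _)
    calc c * ‖A x‖ ≤ (‖A‖ * (M + 1))⁻¹ * ‖A x‖ :=
          mul_le_mul_of_nonneg_right hc2 (norm_nonneg _)
    _ ≤ (‖A‖ * (M + 1))⁻¹ * ((‖A‖ * (M + 1)) * ‖A x - μ • x‖) :=
          mul_le_mul_of_nonneg_left h6 (by positivity)
    _ = ‖A x - μ • x‖ := by field_simp
  have hfar : ∀ μ : ℂ, ‖A‖ + 1 ≤ ‖μ‖ → ∀ x : X, c * ‖A x‖ ≤ ‖A x - μ • x‖ := by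
    intro μ hμ x
    have h1 : ‖μ • x‖ - ‖A x‖ ≤ ‖A x - μ • x‖ := by
      rw [norm_sub_rev]
      exact norm_sub_norm_le _ _
    have h2 : ‖μ • x‖ = ‖μ‖ * ‖x‖ := norm_smul _ _
    have h3 : (‖A‖ + 1) * ‖x‖ ≤ ‖μ‖ * ‖x‖ :=
      mul_le_mul_of_nonneg_right hμ (norm_nonneg _)
    have h4 : ‖A x‖ ≤ ‖A‖ * ‖x‖ := A.le_opNorm x
    have h5 : ‖x‖ ≤ ‖A x - μ • x‖ := by nlinarith
    have hc3 : c ≤ ‖A‖⁻¹ := le_trans (min_le_right _ _) (min_le_right _ _)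
    calc c * ‖A x‖ ≤ ‖A‖⁻¹ * ‖A x‖ := mul_le_mul_of_nonneg_right hc3 (norm_nonneg _)
    _ ≤ ‖A‖⁻¹ * (‖A‖ * ‖x‖) := mul_le_mul_of_nonneg_left h4 (by positivity)
    _ = ‖x‖ := by field_simp
    _ ≤ ‖A x - μ • x‖ := h5
  rintro x μ ⟨t, ht, rfl⟩
  have ht0 : (0 : ℝ) ≤ t := ht
  by_cases h1 : t ≤ 1
  · have hft : f t = (t : ℂ) * lam0 := by rw [hf]; simp [h1]
    rw [hft]
    apply hsmall
    rw [norm_mul, Complex.norm_real, Real.norm_eq_abs, abs_of_nonneg ht0]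
    have : t * ‖lam0‖ ≤ 1 * ‖lam0‖ := mul_le_mul_of_nonneg_right h1 (norm_nonneg _)
    linarith
  · by_cases h2 : t ≤ 2
    · have ht1 : (0 : ℝ) ≤ t - 1 := by linarith [not_le.mp h1]
      have ht2 : t - 1 ≤ 1 := by linarith
      have hft : f t = γ ⟨t - 1, ht1, ht2⟩ := by
        rw [hf]; simp only [h1, if_false, h2, if_true]
        exact Path.extend_extends' γ ⟨t - 1, ht1, ht2⟩
      rw [hft]
      exact hmid _ (mem_range_self _) x
    · have hft : f t = ((t - 1 : ℝ) : ℂ) * a := by rw [hf]; simp [h1, h2]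
      rw [hft]
      apply hfar
      rw [norm_mul, Complex.norm_real, ha_norm, Real.norm_eq_abs,
        abs_of_nonneg (by linarith [not_le.mp h2] : (0:ℝ) ≤ t - 1)]
      have h3 : (1 : ℝ) ≤ t - 1 := by linarith [not_le.mp h2]
      nlinarith
end aux

/-- If `0` is in the closure of the unbounded component `D∞` of the resolvent set of `A`
and `X = R(A) ⊕ N(A)`, then `R(A)` is closed and there is an unbounded curve `C`
emanating from the origin along which `‖Ax − λx‖ ≥ c‖Ax‖` for some `c > 0`. -/
theorem stmt_3 {X : Type*} [NormedAddCommGroup X] [NormedSpace ℂ X] [CompleteSpace X]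
    (A : X →L[ℂ] X)
    (hD : (0 : ℂ) ∈ closure
      (connectedComponentIn (resolventSet ℂ A) ((‖A‖ + 1 : ℝ) : ℂ)))
    (hcompl : IsCompl (LinearMap.range (A : X →ₗ[ℂ] X)) (LinearMap.ker (A : X →ₗ[ℂ] X))) :
    IsClosed ((LinearMap.range (A : X →ₗ[ℂ] X) : Submodule ℂ X) : Set X) ∧
      ∃ C : Set ℂ,
        (∃ f : ℝ → ℂ, ContinuousOn f (Set.Ici (0 : ℝ)) ∧ f 0 = 0 ∧
          Tendsto (fun t => ‖f t‖) atTop atTop ∧ C = f '' Set.Ici (0 : ℝ)) ∧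
        ∃ c > (0 : ℝ), ∀ x : X, ∀ μ ∈ C, c * ‖A x‖ ≤ ‖A x - μ • x‖ := by
  by_cases hA0 : A = 0
  · subst hA0
    constructor
    · have hbot : LinearMap.range ((0 : X →L[ℂ] X) : X →ₗ[ℂ] X) = ⊥ := by
        ext x; simp [eq_comm]
      rw [hbot]
      simpa using isClosed_singleton (x := (0 : X))
    · refine ⟨(fun t : ℝ => (t : ℂ)) '' Set.Ici 0,
        ⟨fun t : ℝ => (t : ℂ), Complex.continuous_ofReal.continuousOn, by norm_num, ?_, rfl⟩,
        1, one_pos, ?_⟩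
      · simpa using tendsto_abs_atTop_atTop
      · intro x μ _
        simp
  · exact ⟨aux_quot A hcompl,
      aux_main A hD hcompl (aux_quot A hcompl)
        ⟨aux_bddBelow A hcompl (aux_quot A hcompl), aux_K A hcompl (aux_quot A hcompl)⟩
        (fun hμ x => aux_resolvent A hμ x) (aux_res_cont A) hA0⟩
end

section
/- Let X be a complex Banach space and A : X → X a bounded linear operator such that 0 belongs to the closure of D∞, the unbounded component of the resolvent set of A. If R(A) is closed and there exists an unbounded curve C emanating from the origin with φ_C(A) < π (i.e., there exists c > 0 such that ‖Ax − λx‖ ≥ c‖Ax‖ for all x ∈ X and all λ ∈ C), then X = R(A) ⊕ N(A). -/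
open Filter Set


lemma stmt4_core {X : Type*} [NormedAddCommGroup X] [NormedSpace ℂ X] [CompleteSpace X]
    (A : X →L[ℂ] X)
    (hclosed : IsClosed ((LinearMap.range (A : X →ₗ[ℂ] X) : Submodule ℂ X) : Set X))
    (c : ℝ) (hc : 0 < c)
    (μ : ℕ → ℂ)
    (hres : ∀ n, IsUnit ((μ n) • (1 : X →L[ℂ] X) - A))
    (hlim : Tendsto μ atTop (nhds 0))
    (hang : ∀ (x : X) (n : ℕ), c * ‖A x‖ ≤ ‖A x - μ n • x‖) :
    IsCompl (LinearMap.range (A : X →ₗ[ℂ] X)) (LinearMap.ker (A : X →ₗ[ℂ] X)) := by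
  set R : ℕ → (X →L[ℂ] X) := fun n => ↑((hres n).unit⁻¹) with hR
  -- basic identities
  have hBR : ∀ n, ((μ n) • (1 : X →L[ℂ] X) - A) * (R n) = 1 := by
    intro n
    rw [hR, ← (hres n).unit_spec]
    exact (hres n).unit.mul_inv
  have hRB : ∀ n, (R n) * ((μ n) • (1 : X →L[ℂ] X) - A) = 1 := by
    intro n
    rw [hR, ← (hres n).unit_spec]
    exact (hres n).unit.inv_mul
  have hBRy : ∀ n y, (μ n) • (R n y) - A (R n y) = y := by
    intro n y
    have h2 := congrArg (fun (T : X →L[ℂ] X) => T y) (hBR n)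
    simpa [ContinuousLinearMap.mul_apply, ContinuousLinearMap.sub_apply,
      ContinuousLinearMap.smul_apply, ContinuousLinearMap.one_apply] using h2
  have hRBy : ∀ n y, R n ((μ n) • y - A y) = y := by
    intro n y
    have h2 := congrArg (fun (T : X →L[ℂ] X) => T y) (hRB n)
    simpa [ContinuousLinearMap.mul_apply, ContinuousLinearMap.sub_apply,
      ContinuousLinearMap.smul_apply, ContinuousLinearMap.one_apply] using h2
  have hF2 : ∀ n y, ‖A (R n y)‖ ≤ c⁻¹ * ‖y‖ := by
    intro n y
    have h := hang (R n y) n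
    have h2 : ‖A (R n y) - μ n • (R n y)‖ = ‖y‖ := by
      rw [← norm_neg, neg_sub, hBRy n y]
    rw [h2] at h
    rw [inv_mul_eq_div, le_div_iff₀ hc, mul_comm]
    exact h
  have hF3 : ∀ n y, ‖(μ n) • (R n y)‖ ≤ (1 + c⁻¹) * ‖y‖ := by
    intro n y
    calc ‖(μ n) • (R n y)‖ ≤ ‖(μ n) • (R n y) - A (R n y)‖ + ‖A (R n y)‖ := by
            have := norm_add_le ((μ n) • (R n y) - A (R n y)) (A (R n y))
            simpa using this
      _ ≤ ‖y‖ + c⁻¹ * ‖y‖ := by rw [hBRy n y]; exact add_le_add le_rfl (hF2 n y)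
      _ = (1 + c⁻¹) * ‖y‖ := by ring
  have hF5 : ∀ n (k : X), A k = 0 → (μ n) • (R n k) = k := by
    intro n k hk
    have h := hRBy n k
    rw [hk, sub_zero, map_smul] at h
    exact h
  have hF6 : ∀ n y, ‖(μ n) • (R n (A y))‖ ≤ ‖μ n‖ * ((1 + c⁻¹) * ‖y‖ + ‖y‖) := by
    intro n y
    have h : R n (A y) = (μ n) • (R n y) - y := by
      have h2 : A y = (μ n) • y - ((μ n) • y - A y) := by abel
      rw [h2, map_sub, map_smul, hRBy n y]
    rw [h, norm_smul]
    have h3 : ‖(μ n) • (R n y) - y‖ ≤ (1 + c⁻¹) * ‖y‖ + ‖y‖ :=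
      le_trans (norm_sub_le _ _) (add_le_add (hF3 n y) le_rfl)
    exact mul_le_mul_of_nonneg_left h3 (norm_nonneg _)
  rw [isCompl_iff]
  constructor
  · -- disjoint
    rw [Submodule.disjoint_def]
    rintro x ⟨y, rfl⟩ hker
    have hker' : A (A y) = 0 := LinearMap.mem_ker.mp hker
    have hbd : ∀ n, ‖A y‖ ≤ ‖μ n‖ * ((1 + c⁻¹) * ‖y‖ + ‖y‖) := by
      intro n
      calc ‖A y‖ = ‖(μ n) • (R n (A y))‖ := by rw [hF5 n (A y) hker']
        _ ≤ ‖μ n‖ * ((1 + c⁻¹) * ‖y‖ + ‖y‖) := hF6 n y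
    have hlim2 : Tendsto (fun n => ‖μ n‖ * ((1 + c⁻¹) * ‖y‖ + ‖y‖)) atTop (nhds 0) := by
      have := (hlim.norm).mul_const ((1 + c⁻¹) * ‖y‖ + ‖y‖)
      simpa using this
    have : ‖A y‖ ≤ 0 := ge_of_tendsto hlim2 (Eventually.of_forall hbd)
    exact norm_le_zero_iff.mp this
  · -- codisjoint
    rw [codisjoint_iff, eq_top_iff]
    intro x _
    -- open mapping constant for the closed range
    haveI : CompleteSpace (LinearMap.range (A : X →ₗ[ℂ] X)) := hclosed.completeSpace_coe
    set Acod : X →L[ℂ] (LinearMap.range (A : X →ₗ[ℂ] X)) :=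
      A.codRestrict (LinearMap.range (A : X →ₗ[ℂ] X)) (fun z => LinearMap.mem_range_self _ z) with hAcod
    have hsurj : Function.Surjective Acod := by
      rintro ⟨_, y, rfl⟩
      exact ⟨y, rfl⟩
    obtain ⟨γ, hγpos, hγ⟩ := ContinuousLinearMap.exists_preimage_norm_le Acod hsurj
    set b : ℕ → X := fun n => (μ n) • (R n x) with hb
    have hAb : ∀ n, ‖A (b n)‖ ≤ ‖μ n‖ * (c⁻¹ * ‖x‖) := by
      intro n
      rw [hb]
      simp only [map_smul, norm_smul]
      exact mul_le_mul_of_nonneg_left (hF2 n x) (norm_nonneg _)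
    choose w hw1 hw2 using fun n => hγ ⟨A (b n), LinearMap.mem_range_self _ (b n)⟩
    have hw1' : ∀ n, A (w n) = A (b n) := by
      intro n
      have := congrArg (Subtype.val) (hw1 n)
      simpa [hAcod, ContinuousLinearMap.coe_codRestrict_apply] using this
    have hw2' : ∀ n, ‖w n‖ ≤ γ * (‖μ n‖ * (c⁻¹ * ‖x‖)) := by
      intro n
      refine le_trans (hw2 n) ?_
      have hnorm : ‖(⟨A (b n), LinearMap.mem_range_self _ (b n)⟩ : LinearMap.range (A : X →ₗ[ℂ] X))‖
          = ‖A (b n)‖ := rfl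
      rw [hnorm]
      exact mul_le_mul_of_nonneg_left (hAb n) (le_of_lt hγpos)
    set k : ℕ → X := fun n => b n - w n with hk
    have hkker : ∀ n, A (k n) = 0 := by
      intro n
      rw [hk]
      simp [map_sub, hw1' n]
    have hwlim : Tendsto w atTop (nhds 0) := by
      rw [tendsto_zero_iff_norm_tendsto_zero]
      refine squeeze_zero (fun n => norm_nonneg _) hw2' ?_
      have := (hlim.norm).const_mul γ
      have h2 := this.mul_const (c⁻¹ * ‖x‖)
      simpa [mul_assoc] using h2
    -- decomposition of x
    set v : ℕ → X := fun n => -(R n x) with hv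
    have hdecomp : ∀ n, x = A (v n) + k n + w n := by
      intro n
      calc x = μ n • (R n x) - A (R n x) := (hBRy n x).symm
        _ = A (v n) + k n + w n := by rw [hv, hk, hb, map_neg]; beta_reduce; abel
    -- key estimate
    have hkey : ∀ n j, ‖(μ j) • (R j x) - k n‖ ≤
        (1 + c⁻¹) * ‖w n‖ + ‖μ j‖ * ((1 + c⁻¹) * ‖v n‖ + ‖v n‖) := by
      intro n j
      have hx : x = A (v n) + k n + w n := hdecomp n
      have hRj : (μ j) • (R j x) = (μ j) • (R j (A (v n))) + k n + (μ j) • (R j (w n)) := by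
        conv_lhs => rw [hx]
        rw [map_add, map_add, smul_add, smul_add, hF5 j (k n) (hkker n)]
      have : (μ j) • (R j x) - k n = (μ j) • (R j (A (v n))) + (μ j) • (R j (w n)) := by
        rw [hRj]; abel
      rw [this]
      calc ‖(μ j) • (R j (A (v n))) + (μ j) • (R j (w n))‖
          ≤ ‖(μ j) • (R j (A (v n)))‖ + ‖(μ j) • (R j (w n))‖ := norm_add_le _ _
        _ ≤ ‖μ j‖ * ((1 + c⁻¹) * ‖v n‖ + ‖v n‖) + (1 + c⁻¹) * ‖w n‖ :=
            add_le_add (hF6 j (v n)) (hF3 j (w n))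
        _ = (1 + c⁻¹) * ‖w n‖ + ‖μ j‖ * ((1 + c⁻¹) * ‖v n‖ + ‖v n‖) := by ring
    have hM : (0:ℝ) < 1 + c⁻¹ := by positivity
    -- Cauchy
    have hnormlim : Tendsto (fun n => ‖μ n‖) atTop (nhds 0) := by
      simpa using hlim.norm
    have hcauchy : CauchySeq k := by
      rw [Metric.cauchySeq_iff]
      intro ε hε
      have hwlim' : Tendsto (fun n => (1 + c⁻¹) * ‖w n‖) atTop (nhds 0) := by
        have h1 : Tendsto (fun n => ‖w n‖) atTop (nhds 0) := by
          simpa using hwlim.norm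
        simpa using h1.const_mul (1 + c⁻¹)
      obtain ⟨N, hN⟩ := (hwlim'.eventually_lt_const (show (0:ℝ) < ε/4 by linarith)).exists_forall_of_atTop
      refine ⟨N, fun m hm n hn => ?_⟩
      set K : ℝ := ((1 + c⁻¹) * ‖v m‖ + ‖v m‖) + ((1 + c⁻¹) * ‖v n‖ + ‖v n‖) with hKdef
      have hK0 : 0 ≤ ‖v m‖ + ‖v n‖ := by positivity
      obtain ⟨j, hj⟩ : ∃ j, ‖μ j‖ * K < ε/4 := by
        have h2 : Tendsto (fun j => ‖μ j‖ * K) atTop (nhds 0) := by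
          simpa using hnormlim.mul_const K
        exact (h2.eventually_lt_const (show (0:ℝ) < ε/4 by linarith)).exists
      have e1 := hkey m j
      have e2 := hkey n j
      rw [dist_eq_norm]
      calc ‖k m - k n‖ ≤ ‖(μ j) • (R j x) - k m‖ + ‖(μ j) • (R j x) - k n‖ := by
            have h3 : k m - k n = -((μ j) • (R j x) - k m) + ((μ j) • (R j x) - k n) := by abel
            rw [h3]
            exact le_trans (norm_add_le _ _) (by rw [norm_neg])
        _ ≤ ((1 + c⁻¹) * ‖w m‖ + ‖μ j‖ * ((1 + c⁻¹) * ‖v m‖ + ‖v m‖))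
            + ((1 + c⁻¹) * ‖w n‖ + ‖μ j‖ * ((1 + c⁻¹) * ‖v n‖ + ‖v n‖)) := add_le_add e1 e2
        _ = (1 + c⁻¹) * ‖w m‖ + (1 + c⁻¹) * ‖w n‖ + ‖μ j‖ * K := by rw [hKdef]; ring
        _ < ε := by linarith [hN m hm, hN n hn]
    obtain ⟨kl, hkl⟩ := cauchySeq_tendsto_of_complete hcauchy
    have hklker : A kl = 0 := by
      have h1 : Tendsto (fun n => A (k n)) atTop (nhds (A kl)) :=
        (A.continuous.tendsto kl).comp hkl
      have h2 : Tendsto (fun n => A (k n)) atTop (nhds 0) := by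
        simp only [hkker]
        exact tendsto_const_nhds
      exact (tendsto_nhds_unique h1 h2)
    have hrange : x - kl ∈ LinearMap.range (A : X →ₗ[ℂ] X) := by
      have h1 : Tendsto (fun n => x - k n - w n) atTop (nhds (x - kl - 0)) :=
        Tendsto.sub (Tendsto.sub (tendsto_const_nhds (x := x)) hkl) hwlim
      rw [sub_zero] at h1
      have h2 : ∀ n, x - k n - w n ∈ (LinearMap.range (A : X →ₗ[ℂ] X) : Submodule ℂ X) := by
        intro n
        have := hdecomp n
        have heq : x - k n - w n = A (v n) := by rw [this]; abel
        rw [heq]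
        exact LinearMap.mem_range_self _ _
      exact hclosed.mem_of_tendsto h1 (Eventually.of_forall h2)
    refine Submodule.mem_sup.mpr ⟨x - kl, hrange, kl, LinearMap.mem_ker.mpr hklker, ?_⟩
    abel


set_option maxHeartbeats 1000000 in
theorem stmt_4' {X : Type*} [NormedAddCommGroup X] [NormedSpace ℂ X] [CompleteSpace X]
    (A : X →L[ℂ] X)
    (hclosed : IsClosed ((LinearMap.range (A : X →ₗ[ℂ] X) : Submodule ℂ X) : Set X))
    (C : Set ℂ)
    (hC : ∃ f : ℝ → ℂ, ContinuousOn f (Set.Ici (0 : ℝ)) ∧ f 0 = 0 ∧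
      Tendsto (fun t => ‖f t‖) atTop atTop ∧ C = f '' Set.Ici (0 : ℝ))
    (c : ℝ) (hc : 0 < c)
    (hangle : ∀ x : X, ∀ μ ∈ C, c * ‖A x‖ ≤ ‖A x - μ • x‖) :
    IsCompl (LinearMap.range (A : X →ₗ[ℂ] X)) (LinearMap.ker (A : X →ₗ[ℂ] X)) := by
  classical
  rcases subsingleton_or_nontrivial X with hX | hX
  · -- trivial case
    rw [isCompl_iff]
    constructor
    · rw [Submodule.disjoint_def]
      intro x _ _
      exact Subsingleton.elim x 0
    · rw [codisjoint_iff, eq_top_iff]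
      intro x _
      have : x = 0 := Subsingleton.elim x 0
      rw [this]
      exact Submodule.zero_mem _
  obtain ⟨f, hfc, hf0, hftop, hCeq⟩ := hC
  -- trivial case: A invertible
  by_cases hz : (0 : ℂ) ∈ spectrum ℂ A
  swap
  · have hu : IsUnit A := by
      have h1 := spectrum.notMem_iff.mp hz
      rw [map_zero, zero_sub] at h1
      simpa using h1.neg
    obtain ⟨u, hu⟩ := hu
    have hrange : LinearMap.range (A : X →ₗ[ℂ] X) = ⊤ := by
      rw [LinearMap.range_eq_top]
      intro y
      refine ⟨(↑u⁻¹ : X →L[ℂ] X) y, ?_⟩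
      have h2 := congrArg (fun (T : X →L[ℂ] X) => T y) u.mul_inv
      simpa [ContinuousLinearMap.mul_apply, hu] using h2
    have hker : LinearMap.ker (A : X →ₗ[ℂ] X) = ⊥ := by
      rw [Submodule.eq_bot_iff]
      intro a ha
      have ha0 : A a = 0 := LinearMap.mem_ker.mp ha
      have h2 := congrArg (fun (T : X →L[ℂ] X) => T a) u.inv_mul
      simp only [ContinuousLinearMap.mul_apply, ContinuousLinearMap.one_apply, hu] at h2
      rw [← h2, ha0, map_zero]
    rw [hrange, hker]
    exact isCompl_top_bot
  -- lower bound along the curve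
  have hlow : ∀ m ∈ C, ∀ x : X, c / (1 + c) * (‖m‖ * ‖x‖) ≤ ‖m • x - A x‖ := by
    intro m hm x
    have h1 := hangle x m hm
    rw [norm_sub_rev] at h1
    have h2 : ‖m • x‖ ≤ ‖m • x - A x‖ + ‖A x‖ := by
      have := norm_add_le (m • x - A x) (A x)
      simpa using this
    rw [norm_smul] at h2
    rw [div_mul_eq_mul_div, div_le_iff₀ (by positivity)]
    nlinarith [norm_nonneg (m • x - A x), norm_nonneg (A x)]
  -- the time set where the curve is in the spectrum
  set T : Set ℝ := Ici (0 : ℝ) ∩ f ⁻¹' (spectrum ℂ A) with hT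
  have hTmem : (0 : ℝ) ∈ T := ⟨self_mem_Ici, by rw [mem_preimage, hf0]; exact hz⟩
  have hTclosed : IsClosed T := hfc.preimage_isClosed_of_isClosed isClosed_Ici (spectrum.isClosed A)
  have hTbdd : BddAbove T := by
    obtain ⟨M0, hM0⟩ := (hftop.eventually_gt_atTop ‖A‖).exists_forall_of_atTop
    refine ⟨M0, fun t ht => ?_⟩
    by_contra hlt
    push_neg at hlt
    exact absurd (spectrum.norm_le_norm_of_mem ht.2) (not_le.mpr (hM0 t hlt.le))
  set tstar := sSup T with htstardef
  have htstar : tstar ∈ T := hTclosed.csSup_mem ⟨0, hTmem⟩ hTbdd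
  have h0le : (0 : ℝ) ≤ tstar := htstar.1
  have hres' : ∀ t, tstar < t → IsUnit ((f t) • (1 : X →L[ℂ] X) - A) := by
    intro t ht
    have htT : t ∉ T := fun h => absurd (le_csSup hTbdd h) (not_le.mpr ht)
    have hfσ : f t ∉ spectrum ℂ A := fun h => htT ⟨le_trans h0le ht.le, h⟩
    have := spectrum.notMem_iff.mp hfσ
    rwa [Algebra.algebraMap_eq_smul_one] at this
  -- the approximating sequence
  set ts : ℕ → ℝ := fun n => tstar + 1 / (n + 1) with hts
  have hts_gt : ∀ n, tstar < ts n := fun n => lt_add_of_pos_right _ (by positivity)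
  have hts_mem : ∀ n, ts n ∈ Ici (0 : ℝ) := fun n => le_trans h0le (hts_gt n).le
  have hts_lim : Tendsto ts atTop (nhds tstar) := by
    have h2 := (tendsto_const_nhds (x := tstar) (f := atTop (α := ℕ))).add
      tendsto_one_div_add_atTop_nhds_zero_nat
    rw [add_zero] at h2
    rw [hts]
    exact h2
  set μs : ℕ → ℂ := fun n => f (ts n) with hμs
  have hμres : ∀ n, IsUnit ((μs n) • (1 : X →L[ℂ] X) - A) := fun n => hres' _ (hts_gt n)
  have hμC : ∀ n, μs n ∈ C := by
    intro n
    rw [hCeq]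
    exact ⟨ts n, hts_mem n, rfl⟩
  have hμlim : Tendsto μs atTop (nhds (f tstar)) := by
    have hcwa : ContinuousWithinAt f (Ici 0) tstar := hfc tstar htstar.1
    have h2 : Tendsto ts atTop (nhdsWithin tstar (Ici 0)) :=
      tendsto_nhdsWithin_iff.mpr ⟨hts_lim, Eventually.of_forall hts_mem⟩
    exact Filter.Tendsto.comp hcwa h2
  -- the last spectral point on the curve is 0
  have hft0 : f tstar = 0 := by
    by_contra hne
    have hnpos : 0 < ‖f tstar‖ := norm_pos_iff.mpr hne
    have ev1 : ∀ᶠ n in atTop, ‖f tstar‖ / 2 < ‖μs n‖ :=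
      (hμlim.norm).eventually_const_lt (by linarith)
    have ev2 : ∀ᶠ n in atTop, ‖f tstar - μs n‖ < c / (1 + c) * (‖f tstar‖ / 2) := by
      have h3 : Tendsto (fun n => ‖f tstar - μs n‖) atTop (nhds 0) := by
        have := (tendsto_const_nhds (x := f tstar) (f := atTop (α := ℕ))).sub hμlim
        have h4 := this.norm
        simpa using h4
      exact h3.eventually_lt_const (by positivity)
    obtain ⟨n, h1, h2⟩ := (ev1.and ev2).exists
    set u := (hμres n).unit with hudef
    have huval : (↑u : X →L[ℂ] X) = (μs n) • (1 : X →L[ℂ] X) - A := (hμres n).unit_spec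
    have hop : ((μs n) • (1 : X →L[ℂ] X) - A) * ↑u⁻¹ = 1 := by
      rw [← huval]
      exact u.mul_inv
    have hBu : ∀ y, (μs n) • ((↑u⁻¹ : X →L[ℂ] X) y) - A ((↑u⁻¹ : X →L[ℂ] X) y) = y := by
      intro y
      have h3 := congrArg (fun (T : X →L[ℂ] X) => T y) hop
      simpa [ContinuousLinearMap.mul_apply, ContinuousLinearMap.sub_apply,
        ContinuousLinearMap.smul_apply, ContinuousLinearMap.one_apply] using h3
    set δ : ℝ := c / (1 + c) * ‖μs n‖ with hδdef
    have hδpos : 0 < δ := by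
      have : 0 < ‖μs n‖ := lt_trans (by positivity) h1
      positivity
    have hinv_norm : ‖(↑u⁻¹ : X →L[ℂ] X)‖ ≤ δ⁻¹ := by
      refine ContinuousLinearMap.opNorm_le_bound _ (by positivity) fun y => ?_
      have h3 : δ * ‖(↑u⁻¹ : X →L[ℂ] X) y‖ ≤ ‖y‖ := by
        have h4 := hlow (μs n) (hμC n) ((↑u⁻¹ : X →L[ℂ] X) y)
        rw [← mul_assoc] at h4
        calc δ * ‖(↑u⁻¹ : X →L[ℂ] X) y‖
            ≤ ‖(μs n) • ((↑u⁻¹ : X →L[ℂ] X) y) - A ((↑u⁻¹ : X →L[ℂ] X) y)‖ := h4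
          _ = ‖y‖ := by rw [hBu y]
      rw [inv_mul_eq_div, le_div_iff₀ hδpos, mul_comm]
      exact h3
    have hinv_pos : 0 < ‖(↑u⁻¹ : X →L[ℂ] X)‖ := by
      rcases eq_or_lt_of_le (norm_nonneg (↑u⁻¹ : X →L[ℂ] X)) with h3 | h3
      · exfalso
        have h4 : (↑u⁻¹ : X →L[ℂ] X) = 0 := by
          rw [← norm_le_zero_iff]
          rw [← h3]
        have h5 := u.inv_mul
        rw [h4, zero_mul] at h5
        have h6 : ‖(1 : X →L[ℂ] X)‖ = 1 := norm_one
        rw [← h5] at h6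
        simp at h6
      · exact h3
    have hnear : ‖((f tstar) • (1 : X →L[ℂ] X) - A) - ↑u‖ < ‖(↑u⁻¹ : X →L[ℂ] X)‖⁻¹ := by
      have hdiff : ((f tstar) • (1 : X →L[ℂ] X) - A) - ↑u = (f tstar - μs n) • (1 : X →L[ℂ] X) := by
        rw [huval, sub_smul]
        abel
      have h7 : ‖(f tstar - μs n) • (1 : X →L[ℂ] X)‖ ≤ ‖f tstar - μs n‖ := by
        have := ContinuousLinearMap.opNorm_smul_le (f tstar - μs n) (1 : X →L[ℂ] X)
        rwa [norm_one, mul_one] at this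
      rw [hdiff]
      refine lt_of_le_of_lt h7 ?_
      have h3 : δ ≤ ‖(↑u⁻¹ : X →L[ℂ] X)‖⁻¹ := by
        have h4 := inv_anti₀ hinv_pos hinv_norm
        rwa [inv_inv] at h4
      have h5 : c / (1 + c) * (‖f tstar‖ / 2) < δ := by
        rw [hδdef]
        have hcc : 0 < c / (1 + c) := by positivity
        exact mul_lt_mul_of_pos_left h1 hcc
      linarith
    have : IsUnit ((f tstar) • (1 : X →L[ℂ] X) - A) := (Units.ofNearby u _ hnear).isUnit
    have h6 := spectrum.mem_iff.mp htstar.2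
    rw [Algebra.algebraMap_eq_smul_one] at h6
    exact h6 this
  -- conclude with the core lemma
  have hμlim0 : Tendsto μs atTop (nhds 0) := hft0 ▸ hμlim
  exact stmt4_core A hclosed c hc μs hμres hμlim0 (fun x n => hangle x (μs n) (hμC n))

/-- If `0` is in the closure of the unbounded component `D∞` of the resolvent set of `A`,
`R(A)` is closed and there is an unbounded curve `C` emanating from the origin with
`‖Ax − λx‖ ≥ c‖Ax‖` for some `c > 0`, then `X = R(A) ⊕ N(A)`. -/
theorem stmt_4 {X : Type*} [NormedAddCommGroup X] [NormedSpace ℂ X] [CompleteSpace X]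
    (A : X →L[ℂ] X)
    (hD : (0 : ℂ) ∈ closure
      (connectedComponentIn (resolventSet ℂ A) ((‖A‖ + 1 : ℝ) : ℂ)))
    (hclosed : IsClosed ((LinearMap.range (A : X →ₗ[ℂ] X) : Submodule ℂ X) : Set X))
    (C : Set ℂ)
    (hC : ∃ f : ℝ → ℂ, ContinuousOn f (Set.Ici (0 : ℝ)) ∧ f 0 = 0 ∧
      Tendsto (fun t => ‖f t‖) atTop atTop ∧ C = f '' Set.Ici (0 : ℝ))
    (c : ℝ) (hc : 0 < c)
    (hangle : ∀ x : X, ∀ μ ∈ C, c * ‖A x‖ ≤ ‖A x - μ • x‖) :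
    IsCompl (LinearMap.range (A : X →ₗ[ℂ] X)) (LinearMap.ker (A : X →ₗ[ℂ] X)) :=
  stmt_4' A hclosed C hC c hc hangle
end

section
/- Let H be a complex Hilbert space and A : H → H a bounded linear operator that is not accretive, i.e., there exists x ∉ N(A) with Re⟨Ax, x⟩ < 0. Then sin²A + cos²A = 1, where sin A = inf_{x∉N(A)} inf_{λ≤0} ‖Ax − λx‖/‖Ax‖ and cos A = inf_{x∉N(A)} Re⟨Ax, x⟩/(‖Ax‖‖x‖). -/
open Filter Set

section aux

variable {H : Type*} [NormedAddCommGroup H] [InnerProductSpace ℂ H]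

private lemma norm_sq_aux (A : H →L[ℂ] H) (x : H) (l : ℝ) :
    ‖A x - (l : ℂ) • x‖ ^ 2 =
      ‖A x‖ ^ 2 - 2 * l * (inner ℂ (A x) x : ℂ).re + l ^ 2 * ‖x‖ ^ 2 := by
  have h := @norm_sub_sq ℂ _ _ _ _ (A x) ((l : ℂ) • x)
  rw [inner_smul_right] at h
  simp only [RCLike.re_to_complex] at h
  rw [h, norm_smul]
  simp only [Complex.mul_re, Complex.ofReal_re, Complex.ofReal_im, Complex.norm_real, mul_pow, sq_abs, Real.norm_eq_abs]
  ring

private lemma sqrt_add_le' (a b : ℝ) (ha : 0 ≤ a) (hb : 0 ≤ b) :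
    Real.sqrt (a + b) ≤ Real.sqrt a + Real.sqrt b := by
  have h : a + b ≤ (Real.sqrt a + Real.sqrt b) ^ 2 := by
    rw [add_sq, Real.sq_sqrt ha, Real.sq_sqrt hb]
    nlinarith [Real.sqrt_nonneg a, Real.sqrt_nonneg b]
  calc Real.sqrt (a + b) ≤ Real.sqrt ((Real.sqrt a + Real.sqrt b) ^ 2) := Real.sqrt_le_sqrt h
    _ = _ := Real.sqrt_sq (by positivity)

private lemma inner_inf_eq (A : H →L[ℂ] H) {x : H} (hx : A x ≠ 0) :
    sInf {r : ℝ | ∃ l : ℝ, l ≤ 0 ∧ r = ‖A x - (l : ℂ) • x‖ / ‖A x‖} =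
      Real.sqrt (1 - (min ((inner ℂ (A x) x : ℂ).re / (‖A x‖ * ‖x‖)) 0) ^ 2) := by
  have hx0 : x ≠ 0 := fun h => hx (by simp [h])
  have hN : (0:ℝ) < ‖A x‖ := norm_pos_iff.2 hx
  have hX : (0:ℝ) < ‖x‖ := norm_pos_iff.2 hx0
  set R := (inner ℂ (A x) x : ℂ).re with hR
  set μ := min R 0 with hμ
  have hμ0 : μ ≤ 0 := min_le_right _ _
  have hμR : μ ≤ R := min_le_left _ _
  have hμmul : μ * R = μ ^ 2 := by
    rcases le_total R 0 with h | h
    · rw [hμ, min_eq_left h]; ring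
    · rw [hμ, min_eq_right h]; ring
  have hmin : min (R / (‖A x‖ * ‖x‖)) 0 = μ / (‖A x‖ * ‖x‖) := by
    rcases le_total R 0 with h | h
    · rw [hμ, min_eq_left h, min_eq_left (div_nonpos_of_nonpos_of_nonneg h (by positivity))]
    · rw [hμ, min_eq_right h, min_eq_right (div_nonneg h (by positivity))]
      simp
  rw [hmin]
  -- key computation at l₀ = μ / ‖x‖²
  have hsq : ‖A x - ((μ / ‖x‖ ^ 2 : ℝ) : ℂ) • x‖ ^ 2 = ‖A x‖ ^ 2 - μ ^ 2 / ‖x‖ ^ 2 := by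
    rw [norm_sq_aux]
    have hX2 : (‖x‖:ℝ) ^ 2 ≠ 0 := by positivity
    have e1 : μ / ‖x‖ ^ 2 * (inner ℂ (A x) x : ℂ).re = μ ^ 2 / ‖x‖ ^ 2 := by
      rw [div_mul_eq_mul_div, ← hR, hμmul]
    have e2 : (μ / ‖x‖ ^ 2) ^ 2 * ‖x‖ ^ 2 = μ ^ 2 / ‖x‖ ^ 2 := by
      field_simp
    linear_combination (-2 : ℝ) * e1 + e2
  have hnn : (0:ℝ) ≤ ‖A x‖ ^ 2 - μ ^ 2 / ‖x‖ ^ 2 := hsq ▸ by positivity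
  apply le_antisymm
  · apply csInf_le
    · exact ⟨0, fun r ⟨l, _, hr⟩ => hr ▸ div_nonneg (norm_nonneg _) (norm_nonneg _)⟩
    · refine ⟨μ / ‖x‖ ^ 2, div_nonpos_of_nonpos_of_nonneg hμ0 (by positivity), ?_⟩
      have h3 : 1 - (μ / (‖A x‖ * ‖x‖)) ^ 2
          = (‖A x - ((μ / ‖x‖ ^ 2 : ℝ) : ℂ) • x‖ / ‖A x‖) ^ 2 := by
        have h4 : (‖A x - ((μ / ‖x‖ ^ 2 : ℝ) : ℂ) • x‖ / ‖A x‖) ^ 2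
            = (‖A x‖ ^ 2 - μ ^ 2 / ‖x‖ ^ 2) / ‖A x‖ ^ 2 := by
          rw [div_pow, hsq]
        rw [h4]
        field_simp [hN.ne', hX.ne']
      rw [h3, Real.sqrt_sq (by positivity)]
  · have hne : {r : ℝ | ∃ l : ℝ, l ≤ 0 ∧ r = ‖A x - (l : ℂ) • x‖ / ‖A x‖}.Nonempty := by
      refine ⟨1, 0, le_refl 0, ?_⟩
      rw [Complex.ofReal_zero, zero_smul, sub_zero, div_self hN.ne']
    apply le_csInf hne
    rintro r ⟨l, hl, rfl⟩
    have h1 : ‖A x‖ ^ 2 - μ ^ 2 / ‖x‖ ^ 2 ≤ ‖A x - (l : ℂ) • x‖ ^ 2 := by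
      rw [norm_sq_aux]
      set t := μ / ‖x‖ with ht
      have htX : t * ‖x‖ = μ := div_mul_cancel₀ μ hX.ne'
      have ht2 : μ ^ 2 / ‖x‖ ^ 2 = t ^ 2 := by rw [ht, div_pow]
      rw [ht2]
      nlinarith [sq_nonneg (l * ‖x‖ - t), mul_nonneg (neg_nonneg.2 hl) (sub_nonneg.2 hμR)]
    have h3 : 1 - (μ / (‖A x‖ * ‖x‖)) ^ 2 = (‖A x‖ ^ 2 - μ ^ 2 / ‖x‖ ^ 2) / ‖A x‖ ^ 2 := by
      field_simp [hN.ne', hX.ne']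
    calc Real.sqrt (1 - (μ / (‖A x‖ * ‖x‖)) ^ 2)
        ≤ Real.sqrt ((‖A x - (l : ℂ) • x‖ / ‖A x‖) ^ 2) := by
          apply Real.sqrt_le_sqrt
          rw [h3, div_pow]
          exact (div_le_div_iff_of_pos_right (by positivity)).2 h1
      _ = ‖A x - (l : ℂ) • x‖ / ‖A x‖ := Real.sqrt_sq (by positivity)

end aux

/-- If a bounded operator `A` on a complex Hilbert space is not accretive (there is
`x ∉ N(A)` with `Re⟨Ax,x⟩ < 0`), then `sin²A + cos²A = 1`, where
`sin A = inf_{x∉N(A)} inf_{λ≤0} ‖Ax − λx‖/‖Ax‖` and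
`cos A = inf_{x∉N(A)} Re⟨Ax,x⟩/(‖Ax‖‖x‖)`. -/
theorem stmt_5 {H : Type*} [NormedAddCommGroup H] [InnerProductSpace ℂ H]
    [CompleteSpace H] (A : H →L[ℂ] H)
    (hnotacc : ∃ x : H, x ∉ LinearMap.ker (A : H →ₗ[ℂ] H) ∧ (inner ℂ (A x) x : ℂ).re < 0) :
    (sInf {s : ℝ | ∃ x : H, x ∉ LinearMap.ker (A : H →ₗ[ℂ] H) ∧
        s = sInf {r : ℝ | ∃ l : ℝ, l ≤ 0 ∧ r = ‖A x - (l : ℂ) • x‖ / ‖A x‖}}) ^ 2 +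
      (sInf {s : ℝ | ∃ x : H, x ∉ LinearMap.ker (A : H →ₗ[ℂ] H) ∧
        s = (inner ℂ (A x) x : ℂ).re / (‖A x‖ * ‖x‖)}) ^ 2 = 1 := by
  obtain ⟨x₀, hx₀, hneg⟩ := hnotacc
  have hker : ∀ y : H, y ∉ LinearMap.ker (A : H →ₗ[ℂ] H) → A y ≠ 0 := by
    intro y hy h
    exact hy (LinearMap.mem_ker.2 h)
  have hA0 : A x₀ ≠ 0 := hker x₀ hx₀
  set C : Set ℝ := {s : ℝ | ∃ x : H, x ∉ LinearMap.ker (A : H →ₗ[ℂ] H) ∧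
      s = (inner ℂ (A x) x : ℂ).re / (‖A x‖ * ‖x‖)} with hCdef
  set S : Set ℝ := {s : ℝ | ∃ x : H, x ∉ LinearMap.ker (A : H →ₗ[ℂ] H) ∧
      s = sInf {r : ℝ | ∃ l : ℝ, l ≤ 0 ∧ r = ‖A x - (l : ℂ) • x‖ / ‖A x‖}} with hSdef
  -- basic facts about elements of C
  have hCel : ∀ s ∈ C, -1 ≤ s ∧ s ≤ 1 := by
    rintro s ⟨x, hx, rfl⟩
    have hAx : A x ≠ 0 := hker x hx
    have hx0 : x ≠ 0 := fun h => hAx (by simp [h])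
    have hN : (0:ℝ) < ‖A x‖ := norm_pos_iff.2 hAx
    have hX : (0:ℝ) < ‖x‖ := norm_pos_iff.2 hx0
    have habs : |(inner ℂ (A x) x : ℂ).re| ≤ ‖A x‖ * ‖x‖ :=
      (Complex.abs_re_le_norm _).trans (norm_inner_le_norm (A x) x)
    obtain ⟨h1, h2⟩ := abs_le.1 habs
    constructor
    · rw [le_div_iff₀ (mul_pos hN hX)]; linarith
    · rw [div_le_iff₀ (mul_pos hN hX)]; linarith
  have hCne : C.Nonempty := ⟨_, x₀, hx₀, rfl⟩
  have hCbdd : BddBelow C := ⟨-1, fun s hs => (hCel s hs).1⟩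
  set m : ℝ := sInf C with hm
  have hm1 : -1 ≤ m := le_csInf hCne fun s hs => (hCel s hs).1
  have hmneg : m < 0 := by
    have hmem : (inner ℂ (A x₀) x₀ : ℂ).re / (‖A x₀‖ * ‖x₀‖) ∈ C := ⟨x₀, hx₀, rfl⟩
    have hx00 : x₀ ≠ 0 := fun h => hA0 (by simp [h])
    have : (inner ℂ (A x₀) x₀ : ℂ).re / (‖A x₀‖ * ‖x₀‖) < 0 :=
      div_neg_of_neg_of_pos hneg (mul_pos (norm_pos_iff.2 hA0) (norm_pos_iff.2 hx00))
    exact lt_of_le_of_lt (csInf_le hCbdd hmem) this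
  have hm2 : m ^ 2 ≤ 1 := by nlinarith
  -- elements of S in closed form
  have hSel : ∀ s ∈ S, ∃ x : H, x ∉ LinearMap.ker (A : H →ₗ[ℂ] H) ∧
      s = Real.sqrt (1 - (min ((inner ℂ (A x) x : ℂ).re / (‖A x‖ * ‖x‖)) 0) ^ 2) := by
    rintro s ⟨x, hx, rfl⟩
    exact ⟨x, hx, inner_inf_eq A (hker x hx)⟩
  have hSne : S.Nonempty := ⟨_, x₀, hx₀, rfl⟩
  have hSbdd : BddBelow S := by
    refine ⟨0, fun s hs => ?_⟩
    obtain ⟨x, _, rfl⟩ := hSel s hs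
    positivity
  -- sin A = sqrt (1 - m²)
  have hsin : sInf S = Real.sqrt (1 - m ^ 2) := by
    apply le_antisymm
    · -- upper bound: for every ε > 0, sInf S ≤ √(1-m²) + ε
      have key : ∀ ε : ℝ, 0 < ε → sInf S ≤ Real.sqrt (1 - m ^ 2) + ε := by
        intro ε hε
        set δ : ℝ := min (ε ^ 2 / 2) (-m / 2) with hδdef
        have hδpos : 0 < δ := lt_min (by positivity) (by linarith)
        obtain ⟨s, hsC, hslt⟩ := exists_lt_of_csInf_lt hCne (show m < m + δ by linarith)
        obtain ⟨x, hx, rfl⟩ := hsC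
        set c : ℝ := (inner ℂ (A x) x : ℂ).re / (‖A x‖ * ‖x‖) with hc
        have hcm : m ≤ c := csInf_le hCbdd ⟨x, hx, rfl⟩
        have hcneg : c < 0 := by
          have : δ ≤ -m / 2 := min_le_right _ _
          linarith
        have hminc : min c 0 = c := min_eq_left hcneg.le
        have hmemS : Real.sqrt (1 - c ^ 2) ∈ S := by
          refine ⟨x, hx, ?_⟩
          rw [inner_inf_eq A (hker x hx), ← hc, hminc]
        have hstep : Real.sqrt (1 - c ^ 2) ≤ Real.sqrt (1 - m ^ 2) + ε := by
          have hδε : 2 * δ ≤ ε ^ 2 := by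
            have : δ ≤ ε ^ 2 / 2 := min_le_left _ _
            linarith
          have hdiff : 1 - c ^ 2 ≤ (1 - m ^ 2) + ε ^ 2 := by nlinarith
          calc Real.sqrt (1 - c ^ 2) ≤ Real.sqrt ((1 - m ^ 2) + ε ^ 2) :=
                Real.sqrt_le_sqrt hdiff
            _ ≤ Real.sqrt (1 - m ^ 2) + Real.sqrt (ε ^ 2) :=
                sqrt_add_le' _ _ (by linarith) (by positivity)
            _ = Real.sqrt (1 - m ^ 2) + ε := by rw [Real.sqrt_sq hε.le]
        exact (csInf_le hSbdd hmemS).trans hstep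
      by_contra hcon
      push_neg at hcon
      have := key ((sInf S - Real.sqrt (1 - m ^ 2)) / 2) (by linarith)
      linarith
    · apply le_csInf hSne
      intro s hs
      obtain ⟨x, hx, rfl⟩ := hSel s hs
      set c : ℝ := (inner ℂ (A x) x : ℂ).re / (‖A x‖ * ‖x‖) with hc
      have hcm : m ≤ c := csInf_le hCbdd ⟨x, hx, rfl⟩
      have hmin_ge : m ≤ min c 0 := le_min hcm hmneg.le
      have hmin_le : min c 0 ≤ 0 := min_le_right _ _
      have hsq : (min c 0) ^ 2 ≤ m ^ 2 := by nlinarith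
      exact Real.sqrt_le_sqrt (by linarith)
  rw [hsin, Real.sq_sqrt (by linarith)]
  ring
end

section
/- Let X be a complex Banach space and A : X → X a bounded linear operator with X = N(A) ⊕ R(A). If 0 lies in a hole of the spectrum σ(A), i.e., in a bounded connected component of ℂ ∖ σ(A), then for every unbounded curve C emanating from the origin one has sin_C A = 0 (i.e., φ_C(A) = π for all such C). -/
open Filter Set

set_option maxHeartbeats 1000000 in
/-- If `X = N(A) ⊕ R(A)` and `0` lies in a bounded connected component of `ℂ ∖ σ(A)`
(a hole of the spectrum), then for every unbounded curve `C` emanating from the origin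
one has `sin_C A = 0`. -/
theorem stmt_9 {X : Type*} [NormedAddCommGroup X] [NormedSpace ℂ X] [CompleteSpace X]
    (A : X →L[ℂ] X)
    (hcompl : IsCompl (LinearMap.ker (A : X →ₗ[ℂ] X)) (LinearMap.range (A : X →ₗ[ℂ] X)))
    (h0 : (0 : ℂ) ∈ (spectrum ℂ A)ᶜ)
    (hbounded : Bornology.IsBounded (connectedComponentIn (spectrum ℂ A)ᶜ (0 : ℂ))) :
    ∀ C : Set ℂ,
      (∃ f : ℝ → ℂ, ContinuousOn f (Set.Ici (0 : ℝ)) ∧ f 0 = 0 ∧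
        Tendsto (fun t => ‖f t‖) atTop atTop ∧ C = f '' Set.Ici (0 : ℝ)) →
      sInf {s : ℝ | ∃ x : X, x ∉ LinearMap.ker (A : X →ₗ[ℂ] X) ∧
        s = sInf {r : ℝ | ∃ μ ∈ C, r = ‖A x - μ • x‖ / ‖A x‖}} = 0 := by
  intro C hC
  obtain ⟨f, hfc, hf0, hftop, hCeq⟩ := hC
  set σ := spectrum ℂ A with hσ
  have h0' : (0 : ℂ) ∉ σ := h0
  -- the set S
  set S := {s : ℝ | ∃ x : X, x ∉ LinearMap.ker (A : X →ₗ[ℂ] X) ∧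
      s = sInf {r : ℝ | ∃ μ ∈ C, r = ‖A x - μ • x‖ / ‖A x‖}} with hS
  -- all elements of S are nonneg
  have hSnonneg : ∀ s ∈ S, 0 ≤ s := by
    rintro s ⟨x, hx, rfl⟩
    apply Real.sInf_nonneg
    rintro r ⟨μ, hμ, rfl⟩
    positivity
  -- the curve hits the spectrum
  have hT : {t : ℝ | 0 ≤ t ∧ f t ∈ σ}.Nonempty := by
    by_contra hT
    push_neg at hT
    simp only [Set.not_nonempty_iff_eq_empty, Set.eq_empty_iff_forall_notMem,
      Set.mem_setOf_eq, not_and] at hT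
    have hCsub : C ⊆ σᶜ := by
      rintro z hz
      rw [hCeq] at hz
      obtain ⟨t, ht, rfl⟩ := hz
      exact hT t ht
    have hCconn : IsPreconnected C := by
      rw [hCeq]
      exact (isPreconnected_Ici).image f hfc
    have h0C : (0 : ℂ) ∈ C := by
      rw [hCeq]
      exact ⟨0, Set.self_mem_Ici, hf0⟩
    have := hCconn.subset_connectedComponentIn h0C hCsub
    have hb : Bornology.IsBounded C := hbounded.subset this
    obtain ⟨M, hM⟩ := isBounded_iff_forall_norm_le.mp hb
    obtain ⟨t, hMt, ht0⟩ := ((hftop.eventually_gt_atTop M).and (eventually_ge_atTop (0:ℝ))).exists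
    have : ‖f t‖ ≤ M := hM _ (by rw [hCeq]; exact ⟨t, ht0, rfl⟩)
    linarith
  -- the first hitting time
  set T := {t : ℝ | 0 ≤ t ∧ f t ∈ σ} with hTdef
  have hTbdd : BddBelow T := ⟨0, fun t ht => ht.1⟩
  have hTclosed : IsClosed T := by
    have : T = Set.Ici (0:ℝ) ∩ f ⁻¹' σ := by
      ext t; simp [hTdef, Set.mem_Ici]
    rw [this]
    exact hfc.preimage_isClosed_of_isClosed isClosed_Ici (spectrum.isClosed A)
  set t₀ := sInf T with ht₀def
  have ht₀T : t₀ ∈ T := hTclosed.csInf_mem hT hTbdd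
  obtain ⟨ht₀0, hμσ⟩ := ht₀T
  set μ := f t₀ with hμdef
  have hμ0 : μ ≠ 0 := fun h => h0' (h ▸ hμσ)
  set m := ‖μ‖ with hmdef
  have hm : 0 < m := norm_pos_iff.mpr hμ0
  have ht₀pos : 0 < t₀ := by
    rcases lt_or_eq_of_le ht₀0 with h | h
    · exact h
    · exact absurd (hf0 ▸ h ▸ hμσ) h0'
  -- main estimate: for every ε > 0, there is s ∈ S with s < ε
  have key : ∀ ε : ℝ, 0 < ε → ∃ s ∈ S, s < ε := by
    intro ε hε
    set δ := min (m/4) (ε*m/8) with hδdef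
    have hδpos : 0 < δ := lt_min (by linarith) (by positivity)
    have hδ1 : δ ≤ m/4 := min_le_left _ _
    have hδ2 : δ ≤ ε*m/8 := min_le_right _ _
    -- find t < t₀ with f t close to μ
    have hcont : Filter.Tendsto f (nhdsWithin t₀ (Set.Ico 0 t₀)) (nhds μ) := by
      have := (hfc t₀ (le_of_lt ht₀pos)).tendsto
      exact this.mono_left (nhdsWithin_mono _ Set.Ico_subset_Ici_self)
    have : ∀ᶠ t in nhdsWithin t₀ (Set.Ico 0 t₀), ‖f t - μ‖ < δ := by
      have := hcont (Metric.ball_mem_nhds μ hδpos)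
      filter_upwards [this] with t ht
      simpa [dist_eq_norm] using ht
    have hne : (nhdsWithin t₀ (Set.Ico 0 t₀)).NeBot := right_nhdsWithin_Ico_neBot ht₀pos
    obtain ⟨t, htclose, htIco⟩ := (this.and self_mem_nhdsWithin).exists
    set lam := f t with hlamdef
    have hlamC : lam ∈ C := by rw [hCeq]; exact ⟨t, htIco.1, rfl⟩
    have hlamnotσ : lam ∉ σ := by
      intro h
      have : t₀ ≤ t := csInf_le hTbdd ⟨htIco.1, h⟩
      exact absurd htIco.2 (not_lt.mpr this)
    -- lam - μ is small, lam is not in spectrum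
    have hlamμ : ‖lam - μ‖ < δ := htclose
    obtain ⟨u, hu⟩ := spectrum.notMem_iff.mp hlamnotσ
    set B := ((u⁻¹ : (X →L[ℂ] X)ˣ) : X →L[ℂ] X) with hBdef
    have huB : ((algebraMap ℂ (X →L[ℂ] X)) lam - A) * B = 1 := by
      rw [← hu]; exact u.mul_inv
    -- norm of B is large
    have hBlarge : 1 ≤ ‖lam - μ‖ * ‖B‖ := by
      by_contra h
      push_neg at h
      have hnorm : ‖(lam - μ) • B‖ < 1 := by
        exact (norm_smul (lam - μ) B).trans_lt h
      have hunit : IsUnit ((algebraMap ℂ (X →L[ℂ] X)) μ - A) := by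
        have hcalc : ((algebraMap ℂ (X →L[ℂ] X)) lam - A) * (1 - (lam - μ) • B)
            = (algebraMap ℂ (X →L[ℂ] X)) μ - A := by
          rw [mul_sub, mul_one, mul_smul_comm, huB]
          rw [Algebra.algebraMap_eq_smul_one, Algebra.algebraMap_eq_smul_one, sub_smul]
          abel
        rw [← hcalc, ← hu]
        refine ⟨u * Units.oneSub _ hnorm, ?_⟩
        rw [Units.val_mul]
        rfl
      exact (spectrum.mem_iff.mp hμσ) hunit
    have hBnorm : 1/δ ≤ ‖B‖ := by
      have hB0 : 0 < ‖B‖ := by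
        rcases (norm_nonneg B).lt_or_eq with h | h
        · exact h
        · exfalso; rw [← h] at hBlarge; simp at hBlarge; linarith
      rw [div_le_iff₀ hδpos, mul_comm]
      calc 1 ≤ ‖lam - μ‖ * ‖B‖ := hBlarge
        _ ≤ δ * ‖B‖ := by nlinarith
    -- find the approximate eigenvector
    have hhalf : 1/(2*δ) < ‖B‖ := by
      have : 1/(2*δ) < 1/δ := by
        rw [div_lt_div_iff₀ (by linarith) hδpos]; linarith
      linarith
    obtain ⟨y, hy1, hy2⟩ := B.exists_lt_apply_of_lt_opNorm hhalf
    set x := B y with hxdef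
    have hxnorm : 1/(2*δ) * ‖y‖ < ‖x‖ * 1 := by
      calc 1/(2*δ) * ‖y‖ ≤ 1/(2*δ) * 1 := by
            apply mul_le_mul_of_nonneg_left (le_of_lt hy1) (by positivity)
        _ < ‖x‖ * 1 := by rw [mul_one, mul_one]; exact hy2
    have hxpos : 0 < ‖x‖ := lt_of_le_of_lt (by positivity) hy2
    have hyx : ‖y‖ < 2*δ*‖x‖ := by
      have h2δ : 0 < 2*δ := by linarith
      have h' := hxnorm
      rw [mul_one, one_div, inv_mul_eq_div, div_lt_iff₀ h2δ] at h'
      linarith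
    -- (lam • x - A x) = y
    have happ : lam • x - A x = y := by
      have h1 : (((algebraMap ℂ (X →L[ℂ] X)) lam - A) * B) y = (1 : X →L[ℂ] X) y := by
        rw [huB]
      rw [ContinuousLinearMap.mul_apply] at h1
      have h2 : ((algebraMap ℂ (X →L[ℂ] X)) lam - A) x = y := h1
      rw [ContinuousLinearMap.sub_apply] at h2
      have h3 : ((algebraMap ℂ (X →L[ℂ] X)) lam) x = lam • x := by
        rw [Algebra.algebraMap_eq_smul_one, ContinuousLinearMap.smul_apply,
          ContinuousLinearMap.one_apply]
      rw [← h2, h3]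
    clear_value x B
    have hAxlam : ‖A x - lam • x‖ < 2*δ*‖x‖ := by
      rw [← norm_neg, neg_sub, happ]; exact hyx
    clear_value lam μ m δ t₀
    -- lower bound on ‖A x‖
    have hlamnorm : m - δ ≤ ‖lam‖ := by
      rw [norm_sub_rev] at hlamμ
      have h2 : m - ‖lam‖ ≤ ‖μ - lam‖ := by
        rw [hmdef]; exact norm_sub_norm_le μ lam
      linarith [hlamμ, h2]
    have hAx : (m - 3*δ) * ‖x‖ ≤ ‖A x‖ := by
      have h1 : ‖lam • x‖ - ‖A x - lam • x‖ ≤ ‖A x‖ := by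
        have := norm_sub_norm_le (lam • x) (lam • x - A x)
        simp only [sub_sub_cancel] at this
        rw [norm_sub_rev] at this
        linarith
      rw [norm_smul] at h1
      nlinarith [hAxlam, hlamnorm, hxpos.le]
    have hAxpos : 0 < ‖A x‖ := by
      have : 0 < (m - 3*δ) * ‖x‖ := by nlinarith
      linarith
    have hxker : x ∉ LinearMap.ker (A : X →ₗ[ℂ] X) := by
      intro h
      have : A x = 0 := h
      rw [this] at hAxpos; simp at hAxpos
    -- the ratio is small
    have hratio : ‖A x - lam • x‖ / ‖A x‖ < ε := by
      rw [div_lt_iff₀ hAxpos]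
      have h1 : ε * ((m - 3*δ) * ‖x‖) ≤ ε * ‖A x‖ :=
        mul_le_mul_of_nonneg_left hAx hε.le
      have e2 : m/4 ≤ m - 3*δ := by linarith
      have e3 : ε*(m/4) ≤ ε*(m-3*δ) := mul_le_mul_of_nonneg_left e2 hε.le
      have e4 : 2*δ ≤ ε*(m-3*δ) := by linarith
      have e5 : 2*δ*‖x‖ ≤ ε*(m-3*δ)*‖x‖ := mul_le_mul_of_nonneg_right e4 hxpos.le
      calc ‖A x - lam • x‖ < 2*δ*‖x‖ := hAxlam
        _ ≤ ε*(m-3*δ)*‖x‖ := e5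
        _ = ε*((m-3*δ)*‖x‖) := by ring
        _ ≤ ε*‖A x‖ := h1
    refine ⟨sInf {r : ℝ | ∃ μ' ∈ C, r = ‖A x - μ' • x‖ / ‖A x‖}, ⟨x, hxker, rfl⟩, ?_⟩
    have hmem : ‖A x - lam • x‖ / ‖A x‖ ∈
        {r : ℝ | ∃ μ' ∈ C, r = ‖A x - μ' • x‖ / ‖A x‖} := ⟨lam, hlamC, rfl⟩
    have hbdd : BddBelow {r : ℝ | ∃ μ' ∈ C, r = ‖A x - μ' • x‖ / ‖A x‖} := by
      refine ⟨0, ?_⟩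
      rintro r ⟨μ', hμ', rfl⟩
      positivity
    exact lt_of_le_of_lt (csInf_le hbdd hmem) hratio
  -- conclude
  have hbddS : BddBelow S := ⟨0, hSnonneg⟩
  apply le_antisymm
  · apply le_of_forall_pos_le_add
    intro ε hε
    obtain ⟨s, hsS, hsε⟩ := key ε hε
    calc sInf S ≤ s := csInf_le hbddS hsS
      _ ≤ 0 + ε := by linarith
  · obtain ⟨s, hsS, _⟩ := key 1 one_pos
    exact le_csInf ⟨s, hsS⟩ hSnonneg
end

section
/- Let X be a complex Banach space, A : X → X a bounded linear operator, and M a closed subspace of X invariant under A. Then σ(A|_M) ∩ D∞ = ∅, where A|_M is the restriction of A to M and D∞ is the unbounded component of the resolvent set of A. -/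
/-!
For `‖A‖ < |z|` both `z - A` and `z - A|_M` are invertible, and the inverse of the second is the
restriction of the inverse of the first, so the resolvent `R(z)` of `A` maps `M` into `M`. For
`x ∈ M` the function `z ↦ R(z) x mod M` is holomorphic on `ρ(A)` and vanishes near infinity,
hence vanishes on `D∞` by the identity theorem. Thus `R(z)` maps `M` into itself for `z ∈ D∞`,
and its restriction to `M` inverts `z - A|_M`.
-/
open Filter Set

namespace ContinuousLinearMap

section Restriction

variable {𝕜 X : Type*} [NontriviallyNormedField 𝕜] [NormedAddCommGroup X] [NormedSpace 𝕜 X]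
  {A : X →L[𝕜] X} {M : Submodule 𝕜 X} {B : M →L[𝕜] M} {z : 𝕜}

lemma mem_resolventSet_of_norm_lt [CompleteSpace X] (h : ‖A‖ < ‖z‖) :
    z ∈ resolventSet 𝕜 A :=
  spectrum.mem_resolventSet_of_norm_lt_mul <|
    (mul_le_of_le_one_right (norm_nonneg A) norm_id_le).trans_lt h

lemma opNorm_le_of_restrict (hB : ∀ x : M, (B x : X) = A x) : ‖B‖ ≤ ‖A‖ :=
  opNorm_le_bound _ (norm_nonneg A) fun m => by
    show ‖(B m : X)‖ ≤ _
    rw [hB]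
    exact A.le_opNorm m

lemma coe_algebraMap_sub_apply_of_restrict (hB : ∀ x : M, (B x : X) = A x) (m : M) :
    ((algebraMap 𝕜 (M →L[𝕜] M) z - B) m : X) = (algebraMap 𝕜 (X →L[𝕜] X) z - A) m := by
  simp [Algebra.algebraMap_eq_smul_one, hB]

lemma algebraMap_sub_apply_resolvent_apply (hA : z ∈ resolventSet 𝕜 A) (x : X) :
    (algebraMap 𝕜 (X →L[𝕜] X) z - A) (resolvent A z x) = x := by
  rw [resolvent, ← mul_apply_eq_comp, Ring.mul_inverse_cancel _ hA, one_apply_eq_self]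

lemma resolvent_apply_algebraMap_sub_apply (hA : z ∈ resolventSet 𝕜 A) (x : X) :
    resolvent A z ((algebraMap 𝕜 (X →L[𝕜] X) z - A) x) = x := by
  rw [resolvent, ← mul_apply_eq_comp, Ring.inverse_mul_cancel _ hA, one_apply_eq_self]

lemma resolvent_apply_coe_of_restrict (hB : ∀ x : M, (B x : X) = A x)
    (hA : z ∈ resolventSet 𝕜 A) (hBz : z ∈ resolventSet 𝕜 B) (y : M) :
    resolvent A z (y : X) = resolvent B z y := by
  conv_lhs => rw [← algebraMap_sub_apply_resolvent_apply hBz y,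
    coe_algebraMap_sub_apply_of_restrict hB]
  exact resolvent_apply_algebraMap_sub_apply hA _

lemma mapsTo_resolvent_of_norm_lt [CompleteSpace X] [CompleteSpace M]
    (hB : ∀ x : M, (B x : X) = A x) (h : ‖A‖ < ‖z‖) :
    MapsTo ⇑(resolvent A z) (M : Set X) M := fun x hx => by
  rw [← Submodule.coe_mk x hx, resolvent_apply_coe_of_restrict hB (mem_resolventSet_of_norm_lt h)
    (mem_resolventSet_of_norm_lt ((opNorm_le_of_restrict hB).trans_lt h))]
  exact Submodule.coe_mem _

lemma mem_resolventSet_of_mapsTo_resolvent [CompleteSpace X] [CompleteSpace M]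
    (hB : ∀ x : M, (B x : X) = A x) (hA : z ∈ resolventSet 𝕜 A)
    (hM : MapsTo ⇑(resolvent A z) (M : Set X) M) : z ∈ resolventSet 𝕜 B := by
  refine isUnit_iff_bijective.2 ⟨fun m₁ m₂ h => Subtype.ext ?_, fun y => ⟨⟨_, hM y.2⟩, ?_⟩⟩
  · rw [← resolvent_apply_algebraMap_sub_apply hA m₁, ← resolvent_apply_algebraMap_sub_apply hA m₂,
      ← coe_algebraMap_sub_apply_of_restrict hB, ← coe_algebraMap_sub_apply_of_restrict hB, h]
  · exact Subtype.ext <| (coe_algebraMap_sub_apply_of_restrict hB _).trans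
      (algebraMap_sub_apply_resolvent_apply hA y)

end Restriction

lemma mapsTo_resolvent_of_mem_connectedComponentIn {X : Type*} [NormedAddCommGroup X]
    [NormedSpace ℂ X] [CompleteSpace X] {A : X →L[ℂ] X} {M : Submodule ℂ X}
    [IsClosed (M : Set X)] {z₀ z : ℂ} (hz₀ : z₀ ∈ resolventSet ℂ A)
    (h : ∀ᶠ w in nhds z₀, MapsTo ⇑(resolvent A w) (M : Set X) M)
    (hz : z ∈ connectedComponentIn (resolventSet ℂ A) z₀) :
    MapsTo ⇑(resolvent A z) (M : Set X) M := fun x hx => by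
  let g : ℂ → X ⧸ M := fun w => M.mkQL (resolvent A w x)
  have hg : AnalyticOnNhd ℂ g (resolventSet ℂ A) :=
    DifferentiableOn.analyticOnNhd (fun w hw =>
      ((M.mkQL.comp (apply ℂ X x)).differentiableAt.comp w
        (spectrum.hasDerivAt_resolvent_const_left hw).differentiableAt).differentiableWithinAt)
      (spectrum.isOpen_resolventSet A)
  have hg₀ : g =ᶠ[nhds z₀] 0 := h.mono fun w hw => (Submodule.Quotient.mk_eq_zero M).2 (hw hx)
  exact (Submodule.Quotient.mk_eq_zero M).1 <|
    (hg.mono (connectedComponentIn_subset _ _)).eqOn_zero_of_preconnected_of_eventuallyEq_zero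
      isPreconnected_connectedComponentIn (mem_connectedComponentIn hz₀) hg₀ hz

end ContinuousLinearMap

theorem stmt_13_general {X : Type*} [NormedAddCommGroup X] [NormedSpace ℂ X] [CompleteSpace X]
    (A : X →L[ℂ] X) (M : Submodule ℂ X) (hMclosed : IsClosed (M : Set X))
    (B : M →L[ℂ] M) (hB : ∀ x : M, (B x : X) = A x) :
    spectrum ℂ B ∩
      connectedComponentIn (resolventSet ℂ A) ((‖A‖ + 1 : ℝ) : ℂ) = ∅ := by
  have : CompleteSpace M := hMclosed.completeSpace_coe
  have hc : ‖A‖ < ‖((‖A‖ + 1 : ℝ) : ℂ)‖ := by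
    rw [Complex.norm_real, Real.norm_of_nonneg (by positivity)]
    exact lt_add_one _
  refine eq_empty_iff_forall_notMem.2 fun z ⟨hzB, hz⟩ => hzB ?_
  refine ContinuousLinearMap.mem_resolventSet_of_mapsTo_resolvent hB
    (connectedComponentIn_subset _ _ hz)
    (ContinuousLinearMap.mapsTo_resolvent_of_mem_connectedComponentIn
      (ContinuousLinearMap.mem_resolventSet_of_norm_lt hc) ?_ hz)
  filter_upwards [(isOpen_lt continuous_const continuous_norm).mem_nhds hc] with w hw
  exact ContinuousLinearMap.mapsTo_resolvent_of_norm_lt hB hw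

/-- "Filling the hole": if `M` is a closed `A`-invariant subspace, then the spectrum of
the restriction `A|_M` does not meet the unbounded component `D∞` of the resolvent set
of `A`. -/
theorem stmt_13 {X : Type*} [NormedAddCommGroup X] [NormedSpace ℂ X] [CompleteSpace X]
    (A : X →L[ℂ] X) (M : Submodule ℂ X) (hMclosed : IsClosed (M : Set X))
    (hMinv : ∀ x ∈ M, A x ∈ M)
    (B : M →L[ℂ] M) (hB : ∀ x : M, (B x : X) = A x) :
    spectrum ℂ B ∩
      connectedComponentIn (resolventSet ℂ A) ((‖A‖ + 1 : ℝ) : ℂ) = ∅ :=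
  stmt_13_general A M hMclosed B hB
end

section
/- Let X be a complex Banach space and A : X → X a bounded linear operator such that R(A) is closed, R(A) ∩ N(A) = {0}, and R(A) + N(A) is closed. Then there exists M > 0 such that ‖Ax‖ ≥ M‖x‖ for all x ∈ R(A), i.e., the restriction of A to R(A) is bounded below. -/
open Filter Set

/-- If `R(A)` is closed, `R(A) ∩ N(A) = {0}` and `R(A) + N(A)` is closed, then the
restriction of `A` to `R(A)` is bounded below. -/
theorem stmt_15 {X : Type*} [NormedAddCommGroup X] [NormedSpace ℂ X] [CompleteSpace X]
    (A : X →L[ℂ] X)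
    (hclosed : IsClosed ((LinearMap.range (A : X →ₗ[ℂ] X) : Submodule ℂ X) : Set X))
    (hdisj : LinearMap.range (A : X →ₗ[ℂ] X) ⊓ LinearMap.ker (A : X →ₗ[ℂ] X) = ⊥)
    (hsum : IsClosed (((LinearMap.range (A : X →ₗ[ℂ] X) ⊔ LinearMap.ker (A : X →ₗ[ℂ] X) : Submodule ℂ X) : Set X))) :
    ∃ M > (0 : ℝ), ∀ x ∈ LinearMap.range (A : X →ₗ[ℂ] X), M * ‖x‖ ≤ ‖A x‖ := by
  classical
  set R : Submodule ℂ X := LinearMap.range (A : X →ₗ[ℂ] X) with hR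
  set N : Submodule ℂ X := LinearMap.ker (A : X →ₗ[ℂ] X) with hN
  haveI : CompleteSpace R := hclosed.completeSpace_coe
  -- the corestriction of A to its range is surjective; open mapping theorem
  let f : X →L[ℂ] R := A.codRestrict R (fun x => LinearMap.mem_range_self _ x)
  have fsurj : Function.Surjective f := by
    rintro ⟨y, x, rfl⟩
    exact ⟨x, rfl⟩
  obtain ⟨C, Cpos, hC⟩ := f.exists_preimage_norm_le fsurj
  -- bounded projection onto R along N inside the Banach space S = R ⊔ N
  set S : Submodule ℂ X := R ⊔ N with hS
  haveI : CompleteSpace S := hsum.completeSpace_coe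
  let p : Submodule ℂ S := R.comap S.subtype
  let q : Submodule ℂ S := N.comap S.subtype
  have hpclosed : IsClosed (p : Set S) := hclosed.preimage continuous_subtype_val
  have hqclosed : IsClosed (q : Set S) :=
    (ContinuousLinearMap.isClosed_ker A).preimage continuous_subtype_val
  have hcompl : IsCompl p q := by
    constructor
    · rw [disjoint_iff, ← Submodule.comap_inf, hdisj, Submodule.comap_bot,
        Submodule.ker_subtype]
    · rw [codisjoint_iff, eq_top_iff]
      rintro ⟨x, hx⟩ -
      obtain ⟨r, hr, n, hn, rfl⟩ := Submodule.mem_sup.mp hx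
      have hrS : r ∈ S := Submodule.mem_sup_left hr
      have hnS : n ∈ S := Submodule.mem_sup_right hn
      refine Submodule.mem_sup.mpr ⟨⟨r, hrS⟩, hr, ⟨n, hnS⟩, hn, rfl⟩
  let π : S →L[ℂ] p := p.linearProjOfClosedCompl q hcompl hpclosed hqclosed
  set K : ℝ := (‖π‖ + 1) * C with hK
  have Kpos : 0 < K := mul_pos (by positivity) Cpos
  refine ⟨K⁻¹, inv_pos.mpr Kpos, fun x hx => ?_⟩
  -- find u with A u = A x and ‖u‖ ≤ C * ‖A x‖
  obtain ⟨u, hu, hunorm⟩ := hC (f x)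
  have hAu : A u = A x := congrArg Subtype.val hu
  have hfx : ‖(f x : X)‖ = ‖A x‖ := rfl
  have hn : x - u ∈ N := by
    rw [hN, LinearMap.mem_ker]
    show A (x - u) = 0
    rw [map_sub, hAu, sub_self]
  have hxS : x ∈ S := Submodule.mem_sup_left hx
  have hnS : x - u ∈ S := Submodule.mem_sup_right hn
  have huS : u ∈ S := by
    have : u = x - (x - u) := (sub_sub_cancel x u).symm
    rw [this]; exact sub_mem hxS hnS
  -- π of u equals x
  have hπu : π ⟨u, huS⟩ = ⟨⟨x, hxS⟩, hx⟩ := by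
    have hsplit : (⟨u, huS⟩ : S) = (⟨x, hxS⟩ : S) - ⟨x - u, hnS⟩ := by
      ext; simp
    rw [hsplit, map_sub]
    have h1 : π ⟨x, hxS⟩ = ⟨⟨x, hxS⟩, hx⟩ :=
      Submodule.linearProjOfIsCompl_apply_left hcompl ⟨⟨x, hxS⟩, hx⟩
    have h2 : π ⟨x - u, hnS⟩ = 0 :=
      Submodule.linearProjOfIsCompl_apply_right hcompl ⟨⟨x - u, hnS⟩, hn⟩
    rw [h1, h2, sub_zero]
  have hxnorm : ‖x‖ ≤ ‖π‖ * ‖u‖ := by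
    calc ‖x‖ = ‖π ⟨u, huS⟩‖ := by rw [hπu]; rfl
    _ ≤ ‖π‖ * ‖(⟨u, huS⟩ : S)‖ := π.le_opNorm _
    _ = ‖π‖ * ‖u‖ := rfl
  have hub : ‖u‖ ≤ C * ‖A x‖ := hunorm
  have hfinal : ‖x‖ ≤ K * ‖A x‖ := by
    calc ‖x‖ ≤ ‖π‖ * ‖u‖ := hxnorm
    _ ≤ (‖π‖ + 1) * (C * ‖A x‖) := by
        apply mul_le_mul (by linarith) hub (norm_nonneg _) (by positivity)
    _ = K * ‖A x‖ := by ring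
  rw [inv_mul_le_iff₀ Kpos] at *
  linarith [hfinal]
end

section
/- Let X be a complex Banach space and A : X → X a bounded linear operator such that R(A) is closed, R(A) ∩ N(A) = {0}, and R(A) + N(A) is closed. Then R(A²), the range of A², is closed. -/
open Filter Set

/-- If `R(A)` is closed, `R(A) ∩ N(A) = {0}` and `R(A) + N(A)` is closed, then `R(A²)`
is closed. -/
theorem stmt_16 {X : Type*} [NormedAddCommGroup X] [NormedSpace ℂ X] [CompleteSpace X]
    (A : X →L[ℂ] X)
    (hclosed : IsClosed ((LinearMap.range (A : X →ₗ[ℂ] X) : Submodule ℂ X) : Set X))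
    (hdisj : LinearMap.range (A : X →ₗ[ℂ] X) ⊓ LinearMap.ker (A : X →ₗ[ℂ] X) = ⊥)
    (hsum : IsClosed (((LinearMap.range (A : X →ₗ[ℂ] X) ⊔ LinearMap.ker (A : X →ₗ[ℂ] X) : Submodule ℂ X) : Set X))) :
    IsClosed ((LinearMap.range ((A.comp A : X →L[ℂ] X) : X →ₗ[ℂ] X) : Submodule ℂ X) : Set X) := by
  classical
  set N : Submodule ℂ X := LinearMap.ker (A : X →ₗ[ℂ] X) with hN
  set M : Submodule ℂ X := LinearMap.range (A : X →ₗ[ℂ] X) ⊔ LinearMap.ker (A : X →ₗ[ℂ] X) with hM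
  have hNclosed : IsClosed (N : Set X) := ContinuousLinearMap.isClosed_ker A
  -- codomain restriction of A
  let f : X →L[ℂ] (LinearMap.range (A : X →ₗ[ℂ] X)) :=
    A.codRestrict (LinearMap.range (A : X →ₗ[ℂ] X)) (fun x => LinearMap.mem_range_self (A : X →ₗ[ℂ] X) x)
  have hf0 : N ≤ LinearMap.ker (f : X →ₗ[ℂ] (LinearMap.range (A : X →ₗ[ℂ] X))) := by
    intro x hx
    have hx' : A x = 0 := hx
    exact Subtype.ext hx'
  -- the lift to the quotient
  let g : (X ⧸ N) →ₗ[ℂ] (LinearMap.range (A : X →ₗ[ℂ] X)) := N.liftQ (f : X →ₗ[ℂ] (LinearMap.range (A : X →ₗ[ℂ] X))) hf0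
  have hg_cont : Continuous g := by
    have hc : ⇑g ∘ ⇑N.mkQ = ⇑f := rfl
    rw [(N.isOpenQuotientMap_mkQ).isQuotientMap.continuous_iff, hc]
    exact f.continuous
  let gq : (X ⧸ N) →L[ℂ] (LinearMap.range (A : X →ₗ[ℂ] X)) := ⟨g, hg_cont⟩
  have hgq_mk : ∀ x : X, ((gq (Submodule.Quotient.mk x) : LinearMap.range (A : X →ₗ[ℂ] X)) : X) = A x := fun x => rfl
  have hinj : LinearMap.ker (gq : (X ⧸ N) →ₗ[ℂ] (LinearMap.range (A : X →ₗ[ℂ] X))) = ⊥ := by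
    rw [Submodule.eq_bot_iff]
    intro q hq
    obtain ⟨x, rfl⟩ := N.mkQ_surjective q
    have hx : A x = 0 := by
      have := congrArg Subtype.val hq
      simpa [hgq_mk] using this
    exact (Submodule.Quotient.mk_eq_zero N).mpr hx
  have hsurj : LinearMap.range (gq : (X ⧸ N) →ₗ[ℂ] (LinearMap.range (A : X →ₗ[ℂ] X))) = ⊤ := by
    rw [Submodule.eq_top_iff']
    rintro ⟨y, x, rfl⟩
    exact ⟨N.mkQ x, by ext; simp [hgq_mk]⟩
  haveI : CompleteSpace (LinearMap.range (A : X →ₗ[ℂ] X) : Submodule ℂ X) := hclosed.completeSpace_coe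
  let e := ContinuousLinearEquiv.ofBijective gq hinj hsurj
  -- the image of M in the quotient is closed
  have hNM : N ≤ M := le_sup_right
  have hMq : IsClosed (N.mkQ '' (M : Set X)) := by
    rw [← (N.isOpenQuotientMap_mkQ).isQuotientMap.isClosed_preimage]
    have : N.mkQ ⁻¹' (N.mkQ '' (M : Set X)) = (M : Set X) := by
      ext x
      constructor
      · rintro ⟨m, hm, hmx⟩
        have h0 : N.mkQ (x - m) = 0 := by rw [map_sub, hmx, sub_self]
        have hxm : x - m ∈ N := by
          rwa [N.mkQ_apply, Submodule.Quotient.mk_eq_zero] at h0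
        have := hNM hxm
        simpa using M.add_mem this hm
      · intro hx
        exact ⟨x, hx, rfl⟩
    rw [this]
    exact hsum
  -- key set equality
  have hset : ((LinearMap.range ((A.comp A : X →L[ℂ] X) : X →ₗ[ℂ] X) : Submodule ℂ X) : Set X)
      = Subtype.val '' (⇑e '' (N.mkQ '' (M : Set X))) := by
    have hmap : LinearMap.range ((A.comp A : X →L[ℂ] X) : X →ₗ[ℂ] X) = M.map (A : X →ₗ[ℂ] X) := by
      rw [hM, Submodule.map_sup]
      have h1 : (LinearMap.range (A : X →ₗ[ℂ] X)).map (A : X →ₗ[ℂ] X) = LinearMap.range ((A.comp A : X →L[ℂ] X) : X →ₗ[ℂ] X) := by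
        ext y
        simp only [Submodule.mem_map, LinearMap.mem_range, ContinuousLinearMap.coe_coe,
          ContinuousLinearMap.comp_apply]
        constructor
        · rintro ⟨x, ⟨z, rfl⟩, rfl⟩; exact ⟨z, rfl⟩
        · rintro ⟨z, rfl⟩; exact ⟨A z, ⟨z, rfl⟩, rfl⟩
      have h2 : (LinearMap.ker (A : X →ₗ[ℂ] X)).map (A : X →ₗ[ℂ] X) = ⊥ := by
        rw [Submodule.eq_bot_iff]
        rintro y ⟨x, hx, rfl⟩
        simpa using hx
      rw [h1, h2, sup_bot_eq]
    rw [hmap]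
    ext y
    simp only [Submodule.map_coe, mem_image, SetLike.mem_coe]
    constructor
    · rintro ⟨x, hx, rfl⟩
      exact ⟨e (N.mkQ x), ⟨N.mkQ x, ⟨x, hx, rfl⟩, rfl⟩, by
        simp [e, ContinuousLinearEquiv.coeFn_ofBijective, ← hgq_mk]⟩
    · rintro ⟨z, ⟨q, ⟨x, hx, rfl⟩, rfl⟩, rfl⟩
      exact ⟨x, hx, by simp [e, ContinuousLinearEquiv.coeFn_ofBijective, ← hgq_mk]⟩
  rw [hset]
  exact hclosed.isClosedEmbedding_subtypeVal.isClosedMap _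
    (e.toHomeomorph.isClosedMap _ hMq)
end
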